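/- arXiv:1208.5011 — 10 statements merged into one kernel-verified Lean document; each statement's English description precedes it below -/
import Mathlib

section
/- For every v_N ∈ X_N satisfying b(v_N, q_N) = g(q_N) for all q_N ∈ Y_N, and for every q_N ∈ Y_N, the error in the Lagrange multiplier satisfies ‖p - p_N‖_Y ≤ [1 + (γ_b/β_N)·(1 + √(γ_a/α_a))]·‖p - q_N‖_Y + 2·(γ_a/β_N)·‖u - v_N‖_X. -/
/-!
Let `w = u_N - v_N ∈ X_N`. Galerkin orthogonality `a(u_N - u, v) = b(v, p - p_N)` on `X_N`,
together with `b(w, ·) = 0` on `Y_N`, gives the energy identity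
`a(w, w) = b(w, p - q_N) + a(u - v_N, w)`, which bounds `w` in the energy norm `√(a(w, w))`. Writing
`b(v, q_N - p_N) = b(v, q_N - p) + a(w, v) + a(v_N - u, v)` for `v ∈ X_N` and using the
Cauchy–Schwarz inequality for `a` bounds the inf-sup quotient of `q_N - p_N`, hence `‖q_N - p_N‖`;
the triangle inequality through `q_N` concludes.
-/

open Real

namespace LinearMap.BilinForm

lemma apply_le_sqrt_mul_sqrt {M : Type*} [AddCommGroup M] [Module ℝ M]
    (B : LinearMap.BilinForm ℝ M) (hs : ∀ x, 0 ≤ B x x) (hB : LinearMap.IsSymm B) (x y : M) :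
    B x y ≤ √(B x x) * √(B y y) := by
  rw [← sqrt_mul (hs x)]
  exact le_sqrt_of_sq_le (B.apply_sq_le_of_symm hs hB x y)

variable {X : Type*} [SeminormedAddCommGroup X] [Module ℝ X] {a : LinearMap.BilinForm ℝ X}

lemma sqrt_apply_self_le {γ : ℝ} {x : X} (h : a x x ≤ γ * ‖x‖ * ‖x‖) :
    √(a x x) ≤ √γ * ‖x‖ := by
  calc √(a x x) ≤ √(γ * (‖x‖ * ‖x‖)) := sqrt_le_sqrt (by rwa [← mul_assoc])
    _ = √γ * ‖x‖ := by rw [sqrt_mul' _ (mul_self_nonneg _), sqrt_mul_self (norm_nonneg _)]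

lemma sqrt_mul_norm_le_sqrt_apply_self {α : ℝ} {x : X} (h : α * ‖x‖ ^ 2 ≤ a x x) :
    √α * ‖x‖ ≤ √(a x x) := by
  calc √α * ‖x‖ = √(α * ‖x‖ ^ 2) := by rw [sqrt_mul' _ (sq_nonneg _), sqrt_sq (norm_nonneg _)]
    _ ≤ √(a x x) := sqrt_le_sqrt h

lemma apply_self_nonneg_of_coercive {α : ℝ} (hα : 0 ≤ α) (hcoer : ∀ v, α * ‖v‖ ^ 2 ≤ a v v)
    (v : X) : 0 ≤ a v v :=
  (by positivity : 0 ≤ α * ‖v‖ ^ 2).trans (hcoer v)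

variable {Y : Type*} [SeminormedAddCommGroup Y] [Module ℝ Y] {b : X →ₗ[ℝ] Y →ₗ[ℝ] ℝ}
  {α γ γb : ℝ}

lemma sqrt_apply_self_le_of_apply_self_eq (hsymm : LinearMap.IsSymm a) (hα : 0 < α)
    (hcoer : ∀ v, α * ‖v‖ ^ 2 ≤ a v v) (hcont : ∀ w v, a w v ≤ γ * ‖w‖ * ‖v‖) (hγb : 0 ≤ γb)
    (hb : ∀ v q, b v q ≤ γb * ‖v‖ * ‖q‖) {w e : X} {r : Y} (h : a w w = b w r + a e w) :
    √(a w w) ≤ √γ * ‖e‖ + γb / √α * ‖r‖ := by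
  have hpos := apply_self_nonneg_of_coercive hα.le hcoer
  set t := √(a w w)
  have ht : t * t = a w w := mul_self_sqrt (hpos w)
  have hw : ‖w‖ ≤ t / √α := by
    rw [le_div_iff₀ (sqrt_pos.2 hα), mul_comm]
    exact sqrt_mul_norm_le_sqrt_apply_self (hcoer w)
  have hbw : b w r ≤ γb / √α * ‖r‖ * t :=
    calc b w r ≤ γb * ‖w‖ * ‖r‖ := hb w r
      _ ≤ γb * (t / √α) * ‖r‖ := by gcongr
      _ = γb / √α * ‖r‖ * t := by ring
  have hae : a e w ≤ √γ * ‖e‖ * t :=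
    (a.apply_le_sqrt_mul_sqrt hpos hsymm e w).trans
      (mul_le_mul_of_nonneg_right (sqrt_apply_self_le (hcont e e)) (sqrt_nonneg _))
  have hK : 0 ≤ √γ * ‖e‖ + γb / √α * ‖r‖ := by positivity
  nlinarith [sqrt_nonneg (a w w)]

lemma apply_le_of_apply_self_eq (hsymm : LinearMap.IsSymm a) (hα : 0 < α)
    (hcoer : ∀ v, α * ‖v‖ ^ 2 ≤ a v v) (hγ : 0 ≤ γ) (hcont : ∀ w v, a w v ≤ γ * ‖w‖ * ‖v‖)
    (hγb : 0 ≤ γb) (hb : ∀ v q, b v q ≤ γb * ‖v‖ * ‖q‖) {w e : X} {r : Y}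
    (h : a w w = b w r + a e w) (v : X) :
    a w v ≤ (γ * ‖e‖ + γb * √(γ / α) * ‖r‖) * ‖v‖ := by
  have hpos := apply_self_nonneg_of_coercive hα.le hcoer
  calc a w v ≤ √(a w w) * √(a v v) := a.apply_le_sqrt_mul_sqrt hpos hsymm w v
    _ ≤ (√γ * ‖e‖ + γb / √α * ‖r‖) * (√γ * ‖v‖) := by
      gcongr
      · exact sqrt_apply_self_le_of_apply_self_eq hsymm hα hcoer hcont hγb hb h
      · exact sqrt_apply_self_le (hcont v v)
    _ = (γ * ‖e‖ + γb * √(γ / α) * ‖r‖) * ‖v‖ := by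
      rw [sqrt_div' _ hα.le]
      linear_combination (‖e‖ * ‖v‖) * sq_sqrt hγ

end LinearMap.BilinForm

lemma le_of_le_iSup_div_norm {X : Type*} [NormedAddCommGroup X] {P : X → Prop} {φ : X → ℝ}
    {c C : ℝ} (h : c ≤ ⨆ v : {v : X // P v ∧ v ≠ 0}, φ v.1 / ‖v.1‖) (hC : 0 ≤ C)
    (hφ : ∀ v, P v → φ v ≤ C * ‖v‖) : c ≤ C := by
  rcases isEmpty_or_nonempty {v : X // P v ∧ v ≠ 0} with hI | hI
  · -- the empty supremum is `0` in `ℝ`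
    rw [iSup_of_isEmpty] at h
    exact h.trans hC
  · exact h.trans <| ciSup_le fun v => (div_le_iff₀ (norm_pos_iff.2 v.2.2)).2 (hφ _ v.2.1)

theorem stmt1_general
  {X Y : Type*} [NormedAddCommGroup X] [InnerProductSpace ℝ X]
  [NormedAddCommGroup Y] [InnerProductSpace ℝ Y]
  (a : X →ₗ[ℝ] X →ₗ[ℝ] ℝ) (b : X →ₗ[ℝ] Y →ₗ[ℝ] ℝ)
  (ha_symm : ∀ w v : X, a w v = a v w)
  (αa γa : ℝ) (hαa : 0 < αa) (hγa : 0 < γa)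
  (ha_coer : ∀ v : X, αa * ‖v‖ ^ 2 ≤ a v v)
  (ha_cont : ∀ w v : X, a w v ≤ γa * ‖w‖ * ‖v‖)
  (γb : ℝ) (hγb : 0 < γb)
  (hb_cont : ∀ (v : X) (q : Y), b v q ≤ γb * ‖v‖ * ‖q‖)
  (f : X →ₗ[ℝ] ℝ) (g : Y →ₗ[ℝ] ℝ)
  (u : X) (p : Y)
  (htruth1 : ∀ v : X, a u v + b v p = f v)
  (XN : Submodule ℝ X) (YN : Submodule ℝ Y)
  (uN : X) (pN : Y) (huN : uN ∈ XN) (hpN : pN ∈ YN)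
  (hrb1 : ∀ v ∈ XN, a uN v + b v pN = f v)
  (hrb2 : ∀ q ∈ YN, b uN q = g q)
  (βN : ℝ) (hβN : 0 < βN)
  (hinfsupN : ∀ q ∈ YN, βN * ‖q‖ ≤ ⨆ v : {v : X // v ∈ XN ∧ v ≠ 0}, b v.1 q / ‖v.1‖)
  (vN : X) (hvN : vN ∈ XN) (hvN_g : ∀ q ∈ YN, b vN q = g q)
  (qN : Y) (hqN : qN ∈ YN) :
    ‖p - pN‖ ≤ (1 + (γb / βN) * (1 + Real.sqrt (γa / αa))) * ‖p - qN‖ + 2 * (γa / βN) * ‖u - vN‖ := by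
  have hgal : ∀ v ∈ XN, a (uN - u) v = b v (p - pN) := by
    intro v hv
    simp only [map_sub, LinearMap.sub_apply]
    linarith [htruth1 v, hrb1 v hv]
  have hker : ∀ q ∈ YN, b (uN - vN) q = 0 := by
    intro q hq
    simp only [map_sub, LinearMap.sub_apply]
    linarith [hrb2 q hq, hvN_g q hq]
  have henergy : a (uN - vN) (uN - vN) = b (uN - vN) (p - qN) + a (u - vN) (uN - vN) := by
    have h1 := hgal _ (sub_mem huN hvN)
    have h2 := hker _ (sub_mem hqN hpN)
    simp only [map_sub, LinearMap.sub_apply] at h1 h2 ⊢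
    linarith
  set C := γb * (1 + √(γa / αa)) * ‖p - qN‖ + 2 * γa * ‖u - vN‖
  have hbound : ∀ v ∈ XN, b v (qN - pN) ≤ C * ‖v‖ := by
    intro v hv
    have hw := LinearMap.BilinForm.apply_le_of_apply_self_eq ⟨ha_symm⟩ hαa ha_coer hγa.le ha_cont
      hγb.le hb_cont henergy v
    have hb := hb_cont v (qN - p)
    have ha := ha_cont (vN - u) v
    rw [norm_sub_rev] at hb ha
    have hsplit : b v (qN - pN) = b v (qN - p) + a (uN - vN) v + a (vN - u) v := by
      have := hgal v hv
      simp only [map_sub, LinearMap.sub_apply] at this ⊢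
      linarith
    linear_combination hsplit + hb + hw + ha
  have hq : βN * ‖qN - pN‖ ≤ C :=
    le_of_le_iSup_div_norm (hinfsupN _ (sub_mem hqN hpN)) (by positivity) hbound
  calc ‖p - pN‖ ≤ ‖p - qN‖ + ‖qN - pN‖ := norm_sub_le_norm_sub_add_norm_sub p qN pN
    _ ≤ ‖p - qN‖ + C / βN := by
      gcongr
      rwa [le_div_iff₀ hβN, mul_comm]
    _ = (1 + (γb / βN) * (1 + Real.sqrt (γa / αa))) * ‖p - qN‖ + 2 * (γa / βN) * ‖u - vN‖ := by
      ring

theorem stmt1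
  {X Y : Type*} [NormedAddCommGroup X] [InnerProductSpace ℝ X] [FiniteDimensional ℝ X]
  [NormedAddCommGroup Y] [InnerProductSpace ℝ Y] [FiniteDimensional ℝ Y]
  (a : X →ₗ[ℝ] X →ₗ[ℝ] ℝ) (b : X →ₗ[ℝ] Y →ₗ[ℝ] ℝ)
  (ha_symm : ∀ w v : X, a w v = a v w)
  (αa γa : ℝ) (hαa : 0 < αa) (hγa : 0 < γa)
  (ha_coer : ∀ v : X, αa * ‖v‖ ^ 2 ≤ a v v)
  (ha_cont : ∀ w v : X, a w v ≤ γa * ‖w‖ * ‖v‖)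
  (γb : ℝ) (hγb : 0 < γb)
  (hb_cont : ∀ (v : X) (q : Y), b v q ≤ γb * ‖v‖ * ‖q‖)
  (f : X →ₗ[ℝ] ℝ) (g : Y →ₗ[ℝ] ℝ)
  (u : X) (p : Y)
  (htruth1 : ∀ v : X, a u v + b v p = f v)
  (htruth2 : ∀ q : Y, b u q = g q)
  (XN : Submodule ℝ X) (YN : Submodule ℝ Y)
  (uN : X) (pN : Y) (huN : uN ∈ XN) (hpN : pN ∈ YN)
  (hrb1 : ∀ v ∈ XN, a uN v + b v pN = f v)
  (hrb2 : ∀ q ∈ YN, b uN q = g q)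
  (βN : ℝ) (hβN : 0 < βN)
  (hinfsupN : ∀ q ∈ YN, βN * ‖q‖ ≤ ⨆ v : {v : X // v ∈ XN ∧ v ≠ 0}, b v.1 q / ‖v.1‖)
  (vN : X) (hvN : vN ∈ XN) (hvN_g : ∀ q ∈ YN, b vN q = g q)
  (qN : Y) (hqN : qN ∈ YN) :
    ‖p - pN‖ ≤ (1 + (γb / βN) * (1 + Real.sqrt (γa / αa))) * ‖p - qN‖ + 2 * (γa / βN) * ‖u - vN‖ :=
  stmt1_general a b ha_symm αa γa hαa hγa ha_coer ha_cont γb hγb hb_cont f g u p htruth1 XN YN uN pN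
    huN hpN hrb1 hrb2 βN hβN hinfsupN vN hvN hvN_g qN hqN
end

section
/- For every v_N ∈ X_N satisfying b(v_N, q_N) = g(q_N) for all q_N ∈ Y_N, and for every q_N ∈ Y_N, it holds that ‖v_N - u_N‖_{X,a} ≤ ‖v_N - u‖_{X,a} + (γ_b/√α_a)·‖p - q_N‖_Y, where ‖v‖_{X,a} = √(a(v,v)) is the energy norm. -/
/-!
Put `e = v_N - u_N ∈ X_N`. Since `v_N` and `u_N` satisfy the same reduced constraint, `b(e, ·)`
vanishes on `Y_N`; subtracting the first reduced equation from the first truth equation then gives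
`a(u - u_N, e) = b(e, p_N - p) = b(e, q_N - p)`, hence
`a(e, e) = a(v_N - u, e) + b(e, q_N - p)`.
Cauchy–Schwarz for `a` bounds the first term by `‖v_N - u‖_a ‖e‖_a`, and continuity of `b`
with coercivity of `a` bound the second by `(γ_b / √α_a) ‖p - q_N‖ ‖e‖_a`; dividing by `‖e‖_a`
gives the claim.
-/

open Real

lemma LinearMap.BilinForm.apply_le_sqrt_mul_sqrt_s2 {M : Type*} [AddCommGroup M] [Module ℝ M]
    (B : LinearMap.BilinForm ℝ M) (hs : ∀ x, 0 ≤ B x x) (hB : ∀ x y, B x y = B y x) (x y : M) :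
    B x y ≤ √(B x x) * √(B y y) := by
  rw [← sqrt_mul (hs x)]
  exact (le_abs_self _).trans (abs_le_sqrt (B.apply_sq_le_of_symm hs ⟨hB⟩ x y))

lemma sqrt_mul_le_sqrt_of_mul_sq_le {α t x : ℝ} (hα : 0 ≤ α) (ht : 0 ≤ t) (h : α * t ^ 2 ≤ x) :
    √α * t ≤ √x := by
  simpa only [sqrt_mul hα, sqrt_sq ht] using sqrt_le_sqrt h

section SaddlePoint

variable {X Y : Type*} [AddCommGroup X] [Module ℝ X] [AddCommGroup Y] [Module ℝ Y]
  (a : X →ₗ[ℝ] X →ₗ[ℝ] ℝ) (b : X →ₗ[ℝ] Y →ₗ[ℝ] ℝ) (f : X →ₗ[ℝ] ℝ) (g : Y →ₗ[ℝ] ℝ)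
  {XN : Submodule ℝ X} {YN : Submodule ℝ Y} {u uN vN : X} {p pN qN : Y}

lemma apply_sub_eq_zero_of_constraint (hrb2 : ∀ q ∈ YN, b uN q = g q)
    (hvN_g : ∀ q ∈ YN, b vN q = g q) {q : Y} (hq : q ∈ YN) : b (vN - uN) q = 0 := by
  rw [map_sub, LinearMap.sub_apply, hvN_g q hq, hrb2 q hq, sub_self]

lemma apply_sub_self_eq_add_of_saddle (htruth1 : ∀ v : X, a u v + b v p = f v)
    (hrb1 : ∀ v ∈ XN, a uN v + b v pN = f v) (hrb2 : ∀ q ∈ YN, b uN q = g q)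
    (huN : uN ∈ XN) (hpN : pN ∈ YN) (hvN : vN ∈ XN) (hvN_g : ∀ q ∈ YN, b vN q = g q)
    (hqN : qN ∈ YN) :
    a (vN - uN) (vN - uN) = a (vN - u) (vN - uN) + b (vN - uN) (qN - p) := by
  set e := vN - uN
  have hbe : ∀ q ∈ YN, b e q = 0 := fun q hq ↦
    apply_sub_eq_zero_of_constraint b g hrb2 hvN_g hq
  have hgalerkin : a (u - uN) e = b e (qN - p) := by
    rw [map_sub a, LinearMap.sub_apply, map_sub (b e)]
    linarith [htruth1 e, hrb1 e (XN.sub_mem hvN huN), hbe pN hpN, hbe qN hqN]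
  calc a e e = a ((vN - u) + (u - uN)) e := by rw [sub_add_sub_cancel]
    _ = a (vN - u) e + b e (qN - p) := by rw [map_add, LinearMap.add_apply, hgalerkin]

end SaddlePoint

theorem stmt2_general
  {X Y : Type*} [NormedAddCommGroup X] [InnerProductSpace ℝ X]
  [NormedAddCommGroup Y] [InnerProductSpace ℝ Y]
  (a : X →ₗ[ℝ] X →ₗ[ℝ] ℝ) (b : X →ₗ[ℝ] Y →ₗ[ℝ] ℝ)
  (ha_symm : ∀ w v : X, a w v = a v w)
  (αa : ℝ) (hαa : 0 < αa)
  (ha_coer : ∀ v : X, αa * ‖v‖ ^ 2 ≤ a v v)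
  (γb : ℝ) (hγb : 0 < γb)
  (hb_cont : ∀ (v : X) (q : Y), b v q ≤ γb * ‖v‖ * ‖q‖)
  (f : X →ₗ[ℝ] ℝ) (g : Y →ₗ[ℝ] ℝ)
  (u : X) (p : Y)
  (htruth1 : ∀ v : X, a u v + b v p = f v)
  (XN : Submodule ℝ X) (YN : Submodule ℝ Y)
  (uN : X) (pN : Y) (huN : uN ∈ XN) (hpN : pN ∈ YN)
  (hrb1 : ∀ v ∈ XN, a uN v + b v pN = f v)
  (hrb2 : ∀ q ∈ YN, b uN q = g q)
  (vN : X) (hvN : vN ∈ XN) (hvN_g : ∀ q ∈ YN, b vN q = g q)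
  (qN : Y) (hqN : qN ∈ YN) :
    Real.sqrt (a (vN - uN) (vN - uN)) ≤ Real.sqrt (a (vN - u) (vN - u)) + (γb / Real.sqrt αa) * ‖p - qN‖ := by
  set e := vN - uN
  set s := √(a e e)
  set c := √(a (vN - u) (vN - u)) + γb / √αa * ‖p - qN‖
  have hpos : ∀ v, 0 ≤ a v v := fun v ↦ (by positivity : 0 ≤ αa * ‖v‖ ^ 2).trans (ha_coer v)
  have hcs : a (vN - u) e ≤ √(a (vN - u) (vN - u)) * s :=
    LinearMap.BilinForm.apply_le_sqrt_mul_sqrt_s2 a hpos ha_symm (vN - u) e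
  have hnorm : ‖e‖ ≤ s / √αa := by
    rw [le_div_iff₀ (sqrt_pos.mpr hαa), mul_comm]
    exact sqrt_mul_le_sqrt_of_mul_sq_le hαa.le (norm_nonneg e) (ha_coer e)
  have hb : b e (qN - p) ≤ γb / √αa * ‖p - qN‖ * s := calc
    b e (qN - p) ≤ γb * ‖e‖ * ‖p - qN‖ := norm_sub_rev qN p ▸ hb_cont e (qN - p)
    _ ≤ γb * (s / √αa) * ‖p - qN‖ := by gcongr
    _ = γb / √αa * ‖p - qN‖ * s := by ring
  have hsq : s * s ≤ c * s := by
    rw [mul_self_sqrt (hpos e),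
      apply_sub_self_eq_add_of_saddle a b f g htruth1 hrb1 hrb2 huN hpN hvN hvN_g hqN]
    linarith
  have hc : 0 ≤ c := by positivity
  nlinarith [sqrt_nonneg (a e e)]

theorem stmt2
  {X Y : Type*} [NormedAddCommGroup X] [InnerProductSpace ℝ X] [FiniteDimensional ℝ X]
  [NormedAddCommGroup Y] [InnerProductSpace ℝ Y] [FiniteDimensional ℝ Y]
  (a : X →ₗ[ℝ] X →ₗ[ℝ] ℝ) (b : X →ₗ[ℝ] Y →ₗ[ℝ] ℝ)
  (ha_symm : ∀ w v : X, a w v = a v w)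
  (αa γa : ℝ) (hαa : 0 < αa) (hγa : 0 < γa)
  (ha_coer : ∀ v : X, αa * ‖v‖ ^ 2 ≤ a v v)
  (ha_cont : ∀ w v : X, a w v ≤ γa * ‖w‖ * ‖v‖)
  (γb : ℝ) (hγb : 0 < γb)
  (hb_cont : ∀ (v : X) (q : Y), b v q ≤ γb * ‖v‖ * ‖q‖)
  (f : X →ₗ[ℝ] ℝ) (g : Y →ₗ[ℝ] ℝ)
  (u : X) (p : Y)
  (htruth1 : ∀ v : X, a u v + b v p = f v)
  (htruth2 : ∀ q : Y, b u q = g q)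
  (XN : Submodule ℝ X) (YN : Submodule ℝ Y)
  (uN : X) (pN : Y) (huN : uN ∈ XN) (hpN : pN ∈ YN)
  (hrb1 : ∀ v ∈ XN, a uN v + b v pN = f v)
  (hrb2 : ∀ q ∈ YN, b uN q = g q)
  (vN : X) (hvN : vN ∈ XN) (hvN_g : ∀ q ∈ YN, b vN q = g q)
  (qN : Y) (hqN : qN ∈ YN) :
    Real.sqrt (a (vN - uN) (vN - uN)) ≤ Real.sqrt (a (vN - u) (vN - u)) + (γb / Real.sqrt αa) * ‖p - qN‖ :=
  stmt2_general a b ha_symm αa hαa ha_coer γb hγb hb_cont f g u p htruth1 XN YN uN pN huN hpN hrb1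
    hrb2 vN hvN hvN_g qN hqN
end

section
/- For every v_N ∈ X_N satisfying b(v_N, q_N) = g(q_N) for all q_N ∈ Y_N, and for every q_N ∈ Y_N, the error in the primal variable satisfies in the energy norm ‖u - u_N‖_{X,a} ≤ 2·‖u - v_N‖_{X,a} + (γ_b/√α_a)·‖p - q_N‖_Y. -/
/-!
Put `w = v_N - u_N ∈ X_N`. Since `v_N` and `u_N` satisfy the same reduced constraint,
`b(w, ·)` vanishes on `Y_N`, so subtracting the two first equations tested with `w` gives
`a(u - u_N, w) = b(w, q_N - p)`. Hence
`‖w‖_a² = a(u - u_N, w) - a(u - v_N, w) ≤ (γ_b/√α_a ‖p - q_N‖ + ‖u - v_N‖_a) ‖w‖_a`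
by continuity of `b`, coercivity of `a` and Cauchy–Schwarz for `a`; dividing by `‖w‖_a` and
using the triangle inequality for `u - u_N = (u - v_N) + w` gives the estimate.
-/

theorem Real.sqrt_le_of_le_mul_sqrt {x c : ℝ} (hc : 0 ≤ c) (h : x ≤ c * √x) : √x ≤ c := by
  rcases le_or_gt x 0 with hx | hx
  · rwa [Real.sqrt_eq_zero_of_nonpos hx]
  · have hsx : 0 < √x := Real.sqrt_pos.mpr hx
    refine le_of_mul_le_mul_right ?_ hsx
    rwa [Real.mul_self_sqrt hx.le]

namespace LinearMap.BilinForm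

variable {M : Type*} [AddCommGroup M] [Module ℝ M] {B : LinearMap.BilinForm ℝ M}

theorem abs_apply_le_sqrt_mul_sqrt (hs : ∀ x, 0 ≤ B x x) (hB : LinearMap.IsSymm B) (x y : M) :
    |B x y| ≤ √(B x x) * √(B y y) := by
  rw [← Real.sqrt_mul (hs x)]
  exact Real.abs_le_sqrt (B.apply_sq_le_of_symm hs hB x y)

theorem sqrt_apply_add_le (hs : ∀ x, 0 ≤ B x x) (hB : LinearMap.IsSymm B) (x y : M) :
    √(B (x + y) (x + y)) ≤ √(B x x) + √(B y y) := by
  have hxy : B (x + y) (x + y) = B x x + 2 * B x y + B y y := by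
    have := hB.eq x y
    simp only [RingHom.id_apply] at this
    simp only [map_add, LinearMap.add_apply, this]
    ring
  rw [Real.sqrt_le_left (by positivity), hxy, add_sq, Real.sq_sqrt (hs x), Real.sq_sqrt (hs y)]
  linarith [le_abs_self (B x y), abs_apply_le_sqrt_mul_sqrt hs hB x y]

theorem norm_le_sqrt_apply_div {E : Type*} [SeminormedAddCommGroup E] [Module ℝ E]
    {B : LinearMap.BilinForm ℝ E} {α : ℝ} (hα : 0 < α) {v : E} (h : α * ‖v‖ ^ 2 ≤ B v v) :
    ‖v‖ ≤ √(B v v) / √α := by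
  rw [le_div_iff₀ (Real.sqrt_pos.mpr hα), ← Real.sqrt_sq (norm_nonneg v),
    ← Real.sqrt_mul' _ hα.le]
  exact Real.sqrt_le_sqrt (by linarith)

end LinearMap.BilinForm

theorem saddlePoint_galerkin_orthogonality {R X Y : Type*} [CommRing R] [AddCommGroup X]
    [Module R X] [AddCommGroup Y] [Module R Y] {a : X →ₗ[R] X →ₗ[R] R}
    {b : X →ₗ[R] Y →ₗ[R] R} {f : X →ₗ[R] R} {XN : Submodule R X} {YN : Submodule R Y}
    {u uN w : X} {p pN qN : Y} (htruth : ∀ v, a u v + b v p = f v)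
    (hrb : ∀ v ∈ XN, a uN v + b v pN = f v) (hpN : pN ∈ YN) (hqN : qN ∈ YN) (hw : w ∈ XN)
    (hbw : ∀ q ∈ YN, b w q = 0) :
    a (u - uN) w = b w (qN - p) := by
  have hpq := hbw (pN - qN) (sub_mem hpN hqN)
  simp only [map_sub, LinearMap.sub_apply] at hpq ⊢
  linear_combination htruth w - hrb w hw + hpq

theorem stmt3_general
  {X Y : Type*} [NormedAddCommGroup X] [InnerProductSpace ℝ X]
  [NormedAddCommGroup Y] [InnerProductSpace ℝ Y]
  (a : X →ₗ[ℝ] X →ₗ[ℝ] ℝ) (b : X →ₗ[ℝ] Y →ₗ[ℝ] ℝ)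
  (ha_symm : ∀ w v : X, a w v = a v w)
  (αa : ℝ) (hαa : 0 < αa)
  (ha_coer : ∀ v : X, αa * ‖v‖ ^ 2 ≤ a v v)
  (γb : ℝ) (hγb : 0 < γb)
  (hb_cont : ∀ (v : X) (q : Y), b v q ≤ γb * ‖v‖ * ‖q‖)
  (f : X →ₗ[ℝ] ℝ) (g : Y →ₗ[ℝ] ℝ)
  (u : X) (p : Y)
  (htruth1 : ∀ v : X, a u v + b v p = f v)
  (XN : Submodule ℝ X) (YN : Submodule ℝ Y)
  (uN : X) (pN : Y) (huN : uN ∈ XN) (hpN : pN ∈ YN)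
  (hrb1 : ∀ v ∈ XN, a uN v + b v pN = f v)
  (hrb2 : ∀ q ∈ YN, b uN q = g q)
  (vN : X) (hvN : vN ∈ XN) (hvN_g : ∀ q ∈ YN, b vN q = g q)
  (qN : Y) (hqN : qN ∈ YN) :
    Real.sqrt (a (u - uN) (u - uN)) ≤ 2 * Real.sqrt (a (u - vN) (u - vN)) + (γb / Real.sqrt αa) * ‖p - qN‖ := by
  have ha_nonneg (v : X) : 0 ≤ a v v := le_trans (by positivity) (ha_coer v)
  have ha : a.IsSymm := ⟨fun w v => ha_symm w v⟩
  set w := vN - uN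
  set A := √(a (u - vN) (u - vN))
  set C := γb / √αa * ‖p - qN‖
  have hgal : a (u - uN) w = b w (qN - p) :=
    saddlePoint_galerkin_orthogonality htruth1 hrb1 hpN hqN (sub_mem hvN huN)
      fun q hq => by simp [w, hvN_g q hq, hrb2 q hq]
  have hb_err : a (u - uN) w ≤ C * √(a w w) := by
    rw [hgal]
    calc b w (qN - p) ≤ γb * ‖w‖ * ‖p - qN‖ := norm_sub_rev qN p ▸ hb_cont w (qN - p)
      _ ≤ γb * (√(a w w) / √αa) * ‖p - qN‖ := by
        gcongr; exact LinearMap.BilinForm.norm_le_sqrt_apply_div hαa (ha_coer w)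
      _ = C * √(a w w) := by ring
  have ha_err : -a (u - vN) w ≤ A * √(a w w) :=
    (neg_le_abs _).trans (LinearMap.BilinForm.abs_apply_le_sqrt_mul_sqrt ha_nonneg ha _ _)
  have hw : √(a w w) ≤ A + C := by
    refine Real.sqrt_le_of_le_mul_sqrt (by positivity) ?_
    have hww : a w w = a (u - uN) w - a (u - vN) w := by
      simp only [w, map_sub, LinearMap.sub_apply]; ring
    linarith
  have hsplit : u - uN = (u - vN) + w := by simp only [w]; abel
  calc √(a (u - uN) (u - uN)) = √(a ((u - vN) + w) ((u - vN) + w)) := by rw [hsplit]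
    _ ≤ A + √(a w w) := LinearMap.BilinForm.sqrt_apply_add_le ha_nonneg ha _ _
    _ ≤ 2 * A + C := by linarith

theorem stmt3
  {X Y : Type*} [NormedAddCommGroup X] [InnerProductSpace ℝ X] [FiniteDimensional ℝ X]
  [NormedAddCommGroup Y] [InnerProductSpace ℝ Y] [FiniteDimensional ℝ Y]
  (a : X →ₗ[ℝ] X →ₗ[ℝ] ℝ) (b : X →ₗ[ℝ] Y →ₗ[ℝ] ℝ)
  (ha_symm : ∀ w v : X, a w v = a v w)
  (αa γa : ℝ) (hαa : 0 < αa) (hγa : 0 < γa)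
  (ha_coer : ∀ v : X, αa * ‖v‖ ^ 2 ≤ a v v)
  (ha_cont : ∀ w v : X, a w v ≤ γa * ‖w‖ * ‖v‖)
  (γb : ℝ) (hγb : 0 < γb)
  (hb_cont : ∀ (v : X) (q : Y), b v q ≤ γb * ‖v‖ * ‖q‖)
  (f : X →ₗ[ℝ] ℝ) (g : Y →ₗ[ℝ] ℝ)
  (u : X) (p : Y)
  (htruth1 : ∀ v : X, a u v + b v p = f v)
  (htruth2 : ∀ q : Y, b u q = g q)
  (XN : Submodule ℝ X) (YN : Submodule ℝ Y)
  (uN : X) (pN : Y) (huN : uN ∈ XN) (hpN : pN ∈ YN)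
  (hrb1 : ∀ v ∈ XN, a uN v + b v pN = f v)
  (hrb2 : ∀ q ∈ YN, b uN q = g q)
  (vN : X) (hvN : vN ∈ XN) (hvN_g : ∀ q ∈ YN, b vN q = g q)
  (qN : Y) (hqN : qN ∈ YN) :
    Real.sqrt (a (u - uN) (u - uN)) ≤ 2 * Real.sqrt (a (u - vN) (u - vN)) + (γb / Real.sqrt αa) * ‖p - qN‖ :=
  stmt3_general a b ha_symm αa hαa ha_coer γb hγb hb_cont f g u p htruth1 XN YN uN pN huN hpN hrb1
    hrb2 vN hvN hvN_g qN hqN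
end

section
/- For every q_N ∈ Y_N it holds that ‖q_N - p_N‖_Y ≤ (γ_b/β_N)·‖p - q_N‖_Y + (√γ_a/β_N)·‖u - u_N‖_{X,a}, where ‖v‖_{X,a} = √(a(v,v)) is the energy norm. -/
/-!
Galerkin orthogonality of the two saddle point problems gives, for `v ∈ X_N`,
`b(v, q_N - p_N) = b(v, q_N - p) - a(u - u_N, v)`. Continuity of `b`, Cauchy–Schwarz for the
energy form `a` and `√(a(v,v)) ≤ √γ_a ‖v‖` bound this by
`(γ_b ‖p - q_N‖ + √γ_a ‖u - u_N‖_{X,a}) ‖v‖`, and the reduced inf-sup condition turns this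
bound into `β_N ‖q_N - p_N‖ ≤ γ_b ‖p - q_N‖ + √γ_a ‖u - u_N‖_{X,a}`.
-/

open Real

namespace LinearMap.BilinForm

lemma sqrt_apply_self_le_s4 {M : Type*} [SeminormedAddCommGroup M] [Module ℝ M]
    (B : LinearMap.BilinForm ℝ M) {γ : ℝ} (hγ : ∀ x y, B x y ≤ γ * ‖x‖ * ‖y‖) (x : M) :
    √(B x x) ≤ √γ * ‖x‖ := by
  calc √(B x x) ≤ √(γ * ‖x‖ ^ 2) := Real.sqrt_le_sqrt (by nlinarith [hγ x x])
    _ = √γ * ‖x‖ := by rw [Real.sqrt_mul' _ (sq_nonneg _), Real.sqrt_sq (norm_nonneg x)]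

end LinearMap.BilinForm

lemma iSup_div_norm_le {X : Type*} [NormedAddCommGroup X] (P : X → Prop) (φ : X → ℝ)
    {C : ℝ} (hC : 0 ≤ C) (hφ : ∀ v, P v → φ v ≤ C * ‖v‖) :
    ⨆ v : {v : X // P v ∧ v ≠ 0}, φ v.1 / ‖v.1‖ ≤ C :=
  Real.iSup_le (fun ⟨v, hv, hv0⟩ ↦ (div_le_iff₀ (norm_pos_iff.mpr hv0)).mpr (hφ v hv)) hC

lemma galerkin_orthogonality {X Y : Type*} [AddCommGroup X] [Module ℝ X] [AddCommGroup Y]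
    [Module ℝ Y] (a : X →ₗ[ℝ] X →ₗ[ℝ] ℝ) (b : X →ₗ[ℝ] Y →ₗ[ℝ] ℝ) (f : X →ₗ[ℝ] ℝ)
    {u uN : X} {p pN : Y} (XN : Submodule ℝ X)
    (htruth : ∀ v, a u v + b v p = f v) (hrb : ∀ v ∈ XN, a uN v + b v pN = f v)
    {v : X} (hv : v ∈ XN) :
    a (u - uN) v = b v (pN - p) := by
  have h₁ := htruth v
  have h₂ := hrb v hv
  simp only [map_sub, LinearMap.sub_apply]
  linarith

lemma apply_sub_reduced_pressure_le {X Y : Type*} [SeminormedAddCommGroup X] [Module ℝ X]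
    [SeminormedAddCommGroup Y] [Module ℝ Y]
    (a : X →ₗ[ℝ] X →ₗ[ℝ] ℝ) (b : X →ₗ[ℝ] Y →ₗ[ℝ] ℝ) (f : X →ₗ[ℝ] ℝ)
    (ha_symm : a.IsSymm) (ha_nonneg : ∀ v, 0 ≤ a v v) {γa : ℝ}
    (ha_cont : ∀ w v : X, a w v ≤ γa * ‖w‖ * ‖v‖) {γb : ℝ}
    (hb_cont : ∀ (v : X) (q : Y), b v q ≤ γb * ‖v‖ * ‖q‖)
    {u uN : X} {p pN : Y} (XN : Submodule ℝ X)
    (htruth : ∀ v, a u v + b v p = f v) (hrb : ∀ v ∈ XN, a uN v + b v pN = f v)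
    (qN : Y) {v : X} (hv : v ∈ XN) :
    b v (qN - pN) ≤ (γb * ‖p - qN‖ + √γa * √(a (u - uN) (u - uN))) * ‖v‖ := by
  have hsplit : b v (qN - pN) = b v (qN - p) + a (u - uN) (-v) := by
    rw [map_neg, galerkin_orthogonality a b f XN htruth hrb hv]
    simp only [map_sub]
    ring
  have hb : b v (qN - p) ≤ γb * ‖v‖ * ‖p - qN‖ := norm_sub_rev p qN ▸ hb_cont v (qN - p)
  have ha : a (u - uN) (-v) ≤ √(a (u - uN) (u - uN)) * (√γa * ‖v‖) := by
    refine (LinearMap.BilinForm.apply_le_sqrt_mul_sqrt a ha_nonneg ha_symm _ _).trans ?_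
    simp only [map_neg, LinearMap.neg_apply, neg_neg]
    exact mul_le_mul_of_nonneg_left (LinearMap.BilinForm.sqrt_apply_self_le_s4 a ha_cont v)
      (Real.sqrt_nonneg _)
  rw [hsplit]
  linarith

theorem stmt4_general
  {X Y : Type*} [NormedAddCommGroup X] [InnerProductSpace ℝ X]
  [NormedAddCommGroup Y] [InnerProductSpace ℝ Y]
  (a : X →ₗ[ℝ] X →ₗ[ℝ] ℝ) (b : X →ₗ[ℝ] Y →ₗ[ℝ] ℝ)
  (ha_symm : ∀ w v : X, a w v = a v w)
  (αa γa : ℝ) (hαa : 0 < αa)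
  (ha_coer : ∀ v : X, αa * ‖v‖ ^ 2 ≤ a v v)
  (ha_cont : ∀ w v : X, a w v ≤ γa * ‖w‖ * ‖v‖)
  (γb : ℝ) (hγb : 0 < γb)
  (hb_cont : ∀ (v : X) (q : Y), b v q ≤ γb * ‖v‖ * ‖q‖)
  (f : X →ₗ[ℝ] ℝ)
  (u : X) (p : Y)
  (htruth1 : ∀ v : X, a u v + b v p = f v)
  (XN : Submodule ℝ X) (YN : Submodule ℝ Y)
  (uN : X) (pN : Y) (hpN : pN ∈ YN)
  (hrb1 : ∀ v ∈ XN, a uN v + b v pN = f v)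
  (βN : ℝ) (hβN : 0 < βN)
  (hinfsupN : ∀ q ∈ YN, βN * ‖q‖ ≤ ⨆ v : {v : X // v ∈ XN ∧ v ≠ 0}, b v.1 q / ‖v.1‖)
  (qN : Y) (hqN : qN ∈ YN) :
    ‖qN - pN‖ ≤ (γb / βN) * ‖p - qN‖ + (Real.sqrt γa / βN) * Real.sqrt (a (u - uN) (u - uN)) := by
  have ha_nonneg (v : X) : 0 ≤ a v v := (by positivity : 0 ≤ αa * ‖v‖ ^ 2).trans (ha_coer v)
  set C := γb * ‖p - qN‖ + √γa * √(a (u - uN) (u - uN))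
  have hC : 0 ≤ C := by positivity
  have hβ : βN * ‖qN - pN‖ ≤ C :=
    (hinfsupN _ (YN.sub_mem hqN hpN)).trans <| iSup_div_norm_le (· ∈ XN) _ hC fun _ hv ↦
      apply_sub_reduced_pressure_le a b f ⟨ha_symm⟩ ha_nonneg ha_cont hb_cont XN htruth1 hrb1 qN hv
  calc ‖qN - pN‖ ≤ C / βN := (le_div_iff₀' hβN).mpr hβ
    _ = _ := by ring

theorem stmt4
  {X Y : Type*} [NormedAddCommGroup X] [InnerProductSpace ℝ X] [FiniteDimensional ℝ X]
  [NormedAddCommGroup Y] [InnerProductSpace ℝ Y] [FiniteDimensional ℝ Y]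
  (a : X →ₗ[ℝ] X →ₗ[ℝ] ℝ) (b : X →ₗ[ℝ] Y →ₗ[ℝ] ℝ)
  (ha_symm : ∀ w v : X, a w v = a v w)
  (αa γa : ℝ) (hαa : 0 < αa) (hγa : 0 < γa)
  (ha_coer : ∀ v : X, αa * ‖v‖ ^ 2 ≤ a v v)
  (ha_cont : ∀ w v : X, a w v ≤ γa * ‖w‖ * ‖v‖)
  (γb : ℝ) (hγb : 0 < γb)
  (hb_cont : ∀ (v : X) (q : Y), b v q ≤ γb * ‖v‖ * ‖q‖)
  (f : X →ₗ[ℝ] ℝ) (g : Y →ₗ[ℝ] ℝ)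
  (u : X) (p : Y)
  (htruth1 : ∀ v : X, a u v + b v p = f v)
  (htruth2 : ∀ q : Y, b u q = g q)
  (XN : Submodule ℝ X) (YN : Submodule ℝ Y)
  (uN : X) (pN : Y) (huN : uN ∈ XN) (hpN : pN ∈ YN)
  (hrb1 : ∀ v ∈ XN, a uN v + b v pN = f v)
  (hrb2 : ∀ q ∈ YN, b uN q = g q)
  (βN : ℝ) (hβN : 0 < βN)
  (hinfsupN : ∀ q ∈ YN, βN * ‖q‖ ≤ ⨆ v : {v : X // v ∈ XN ∧ v ≠ 0}, b v.1 q / ‖v.1‖)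
  (qN : Y) (hqN : qN ∈ YN) :
    ‖qN - pN‖ ≤ (γb / βN) * ‖p - qN‖ + (Real.sqrt γa / βN) * Real.sqrt (a (u - uN) (u - uN)) :=
  stmt4_general a b ha_symm αa γa hαa ha_coer ha_cont γb hγb hb_cont f u p htruth1 XN YN uN pN hpN
    hrb1 βN hβN hinfsupN qN hqN
end

section
/- The error in the primal variable satisfies the a posteriori bound ‖u - u_N‖_X ≤ ‖r¹‖_{X'}/α_a + √(γ_a/α_a)·‖r²‖_{Y'}/β. -/
/-!
Split `e = u - u_N` as `e = z + w` with `z ∈ ker b` and `w` `a`-orthogonal to `ker b`. On `ker b`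
the residual `r¹` reduces to `a(e, ·)`, so coercivity gives `‖z‖ ≤ ‖r¹‖/α`. Since `r² = b(e, ·)`,
the inf-sup condition yields `w₀` with `b(w₀, ·) = b(w, ·)` and `β‖w₀‖ ≤ ‖r²‖`; as `w₀ - w ∈ ker b`,
`w` has the least energy among such lifts: `α‖w‖² ≤ a(w, w) ≤ a(w₀, w₀) ≤ γ‖w₀‖²`.
-/

open RealInnerProductSpace

noncomputable def dualNorm {E : Type*} [NormedAddCommGroup E] [Module ℝ E] (L : E →ₗ[ℝ] ℝ) : ℝ :=
  ⨆ v : {v : E // v ≠ 0}, L v.1 / ‖v.1‖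

instance {E : Type*} [NormedAddCommGroup E] [InnerProductSpace ℝ E] [FiniteDimensional ℝ E] :
    (innerₗ E).IsPerfPair :=
  .of_injective (fun _ _ h => ext_inner_right ℝ (LinearMap.congr_fun h))
    (fun _ _ h => ext_inner_left ℝ (LinearMap.congr_fun h))

section DualNorm

variable {E : Type*} [NormedAddCommGroup E] [InnerProductSpace ℝ E]

theorem dualNorm_innerₗ (w : E) : dualNorm (innerₗ E w) = ‖w‖ := by
  rcases eq_or_ne w 0 with rfl | hw
  · simp [dualNorm]
  have : Nonempty {v : E // v ≠ 0} := ⟨⟨w, hw⟩⟩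
  have hle : ∀ v : {v : E // v ≠ 0}, innerₗ E w v / ‖v.1‖ ≤ ‖w‖ := fun v => by
    rw [div_le_iff₀ (norm_pos_iff.2 v.2)]
    exact real_inner_le_norm _ _
  refine le_antisymm (ciSup_le hle) ?_
  calc ‖w‖ = innerₗ E w w / ‖w‖ := by
        rw [innerₗ_apply_apply, real_inner_self_eq_norm_mul_norm,
          mul_div_cancel_right₀ _ (norm_ne_zero_iff.2 hw)]
    _ ≤ dualNorm (innerₗ E w) := le_ciSup ⟨‖w‖, Set.forall_mem_range.2 hle⟩ ⟨w, hw⟩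

variable [FiniteDimensional ℝ E]

theorem dualNorm_eq_norm_symm_toPerfPair (L : E →ₗ[ℝ] ℝ) :
    dualNorm L = ‖(innerₗ E).toPerfPair.symm L‖ := by
  conv_lhs => rw [← (innerₗ E).apply_symm_toPerfPair_self L]
  exact dualNorm_innerₗ _

theorem dualNorm_nonneg (L : E →ₗ[ℝ] ℝ) : 0 ≤ dualNorm L :=
  (dualNorm_eq_norm_symm_toPerfPair L).symm ▸ norm_nonneg _

theorem apply_le_dualNorm_mul_norm (L : E →ₗ[ℝ] ℝ) (v : E) : L v ≤ dualNorm L * ‖v‖ := by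
  conv_lhs => rw [← (innerₗ E).apply_symm_toPerfPair_self L]
  rw [dualNorm_eq_norm_symm_toPerfPair]
  exact real_inner_le_norm _ _

theorem norm_le_dualNorm_div {α : ℝ} (hα : 0 < α) {L : E →ₗ[ℝ] ℝ} {v : E}
    (h : α * ‖v‖ ^ 2 ≤ L v) : ‖v‖ ≤ dualNorm L / α := by
  rw [le_div_iff₀ hα]
  rcases (norm_nonneg v).eq_or_lt with hv | hv
  · rw [← hv, zero_mul]
    exact dualNorm_nonneg L
  · refine le_of_mul_le_mul_right ?_ hv
    calc ‖v‖ * α * ‖v‖ = α * ‖v‖ ^ 2 := by ring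
      _ ≤ dualNorm L * ‖v‖ := h.trans (apply_le_dualNorm_mul_norm L v)

end DualNorm

theorem exists_add_eq_of_anisotropic {K V : Type*} [Field K] [AddCommGroup V] [Module K V]
    [FiniteDimensional K V] {B : LinearMap.BilinForm K V} (hB : B.IsRefl)
    (hB₀ : ∀ x, B x x = 0 → x = 0) (W : Submodule K V) (e : V) :
    ∃ z ∈ W, ∃ w ∈ B.orthogonal W, z + w = e := by
  have hcompl : IsCompl W (B.orthogonal W) :=
    (LinearMap.BilinForm.isCompl_orthogonal_iff_disjoint hB).2
      (Submodule.disjoint_def.2 fun x hxW hxO => hB₀ x (hB _ _ (hxO x hxW)))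
  obtain ⟨z, w, hz, hw, hzw⟩ := Submodule.codisjoint_iff_exists_add_eq.1 hcompl.codisjoint e
  exact ⟨z, hz, w, hw, hzw⟩

theorem apply_self_le_apply_add_self {R M : Type*} [CommRing R] [PartialOrder R]
    [IsOrderedRing R] [AddCommGroup M] [Module R M] {B : LinearMap.BilinForm R M}
    (hB : B.IsRefl) {w k : M} (hkw : B k w = 0) (hk : 0 ≤ B k k) :
    B w w ≤ B (w + k) (w + k) := by
  simp only [map_add, LinearMap.add_apply, hkw, hB _ _ hkw, add_zero, zero_add]
  exact le_add_of_nonneg_right hk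

section InfSup

variable {X Y : Type*} [NormedAddCommGroup X] [InnerProductSpace ℝ X] [FiniteDimensional ℝ X]
  [NormedAddCommGroup Y] [InnerProductSpace ℝ Y] [FiniteDimensional ℝ Y]
  (b : X →ₗ[ℝ] Y →ₗ[ℝ] ℝ) {β : ℝ} (hβ : 0 < β)
  (hinfsup : ∀ q : Y, β * ‖q‖ ≤ dualNorm (b.flip q))
include hβ hinfsup

/-- Writing `T q` for the Riesz representative of `b · q`, the inf-sup condition makes
`q ↦ b (T q)` injective, hence onto `Y'`; the lift is `T q₀` for the preimage `q₀` of `b e`. -/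
theorem exists_eq_and_mul_norm_le_dualNorm (e : X) :
    ∃ w, b w = b e ∧ β * ‖w‖ ≤ dualNorm (b e) := by
  set T : Y →ₗ[ℝ] X := (innerₗ X).toPerfPair.symm.toLinearMap ∘ₗ b.flip
  have hT : ∀ q v, ⟪T q, v⟫ = b v q := fun q v =>
    LinearMap.congr_fun ((innerₗ X).apply_symm_toPerfPair_self (b.flip q)) v
  have hT_lower : ∀ q, β * ‖q‖ ≤ ‖T q‖ := fun q =>
    (hinfsup q).trans_eq (dualNorm_eq_norm_symm_toPerfPair _)
  have hinj : Function.Injective (b ∘ₗ T) := by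
    refine (injective_iff_map_eq_zero _).2 fun q hq => norm_le_zero_iff.1 ?_
    have hTq : T q = 0 := inner_self_eq_zero.1 ((hT q (T q)).trans (LinearMap.congr_fun hq q))
    exact nonpos_of_mul_nonpos_right ((hT_lower q).trans_eq (by rw [hTq, norm_zero])) hβ
  obtain ⟨q₀, hq₀⟩ := (LinearMap.injective_iff_surjective_of_finrank_eq_finrank
    Subspace.dual_finrank_eq.symm).1 hinj (b e)
  refine ⟨T q₀, hq₀, ?_⟩
  have hsq : ‖T q₀‖ ^ 2 ≤ dualNorm (b e) * ‖q₀‖ := calc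
    ‖T q₀‖ ^ 2 = b (T q₀) q₀ := by rw [← hT, real_inner_self_eq_norm_sq]
    _ = b e q₀ := LinearMap.congr_fun hq₀ q₀
    _ ≤ dualNorm (b e) * ‖q₀‖ := apply_le_dualNorm_mul_norm _ _
  rcases (norm_nonneg (T q₀)).eq_or_lt with h0 | hpos
  · rw [← h0, mul_zero]
    exact dualNorm_nonneg _
  · refine le_of_mul_le_mul_right ?_ hpos
    nlinarith [hT_lower q₀, dualNorm_nonneg (b e)]

theorem norm_le_of_mem_orthogonal_ker (a : LinearMap.BilinForm ℝ X) (ha : a.IsRefl)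
    {α γ : ℝ} (hα : 0 < α) (hγ : 0 ≤ γ) (ha_coer : ∀ v, α * ‖v‖ ^ 2 ≤ a v v)
    (ha_cont : ∀ w v, a w v ≤ γ * ‖w‖ * ‖v‖) {w : X}
    (hw : w ∈ a.orthogonal (LinearMap.ker b)) :
    ‖w‖ ≤ √(γ / α) * dualNorm (b w) / β := by
  obtain ⟨w₀, hbw₀, hw₀⟩ := exists_eq_and_mul_norm_le_dualNorm b hβ hinfsup w
  have hker : w₀ - w ∈ LinearMap.ker b := by rw [LinearMap.mem_ker, map_sub, hbw₀, sub_self]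
  have hw₀' : ‖w₀‖ ≤ dualNorm (b w) / β := by rw [le_div_iff₀ hβ]; linarith
  have henergy : α * ‖w‖ ^ 2 ≤ γ * (dualNorm (b w) / β) ^ 2 := calc
    α * ‖w‖ ^ 2 ≤ a w w := ha_coer w
    _ ≤ a (w + (w₀ - w)) (w + (w₀ - w)) :=
      apply_self_le_apply_add_self ha (hw _ hker)
        ((ha_coer _).trans' (mul_nonneg hα.le (sq_nonneg _)))
    _ = a w₀ w₀ := by rw [add_sub_cancel]
    _ ≤ γ * ‖w₀‖ * ‖w₀‖ := ha_cont w₀ w₀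
    _ ≤ γ * (dualNorm (b w) / β) ^ 2 := by
      rw [mul_assoc, ← sq]
      gcongr
  have hrhs : 0 ≤ √(γ / α) * dualNorm (b w) / β :=
    div_nonneg (mul_nonneg (Real.sqrt_nonneg _) (dualNorm_nonneg _)) hβ.le
  rw [← pow_le_pow_iff_left₀ (norm_nonneg w) hrhs two_ne_zero, mul_div_assoc, mul_pow,
    Real.sq_sqrt (div_nonneg hγ hα.le), div_mul_eq_mul_div, le_div_iff₀ hα]
  linarith

end InfSup

theorem stmt5_general
  {X Y : Type*} [NormedAddCommGroup X] [InnerProductSpace ℝ X] [FiniteDimensional ℝ X]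
  [NormedAddCommGroup Y] [InnerProductSpace ℝ Y] [FiniteDimensional ℝ Y]
  (a : X →ₗ[ℝ] X →ₗ[ℝ] ℝ) (b : X →ₗ[ℝ] Y →ₗ[ℝ] ℝ)
  (ha_symm : ∀ w v : X, a w v = a v w)
  (αa γa : ℝ) (hαa : 0 < αa) (hγa : 0 < γa)
  (ha_coer : ∀ v : X, αa * ‖v‖ ^ 2 ≤ a v v)
  (ha_cont : ∀ w v : X, a w v ≤ γa * ‖w‖ * ‖v‖)
  (β : ℝ) (hβ : 0 < β)
  (hinfsup : ∀ q : Y, β * ‖q‖ ≤ ⨆ v : {v : X // v ≠ 0}, b v.1 q / ‖v.1‖)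
  (f : X →ₗ[ℝ] ℝ) (g : Y →ₗ[ℝ] ℝ)
  (u : X) (p : Y)
  (htruth1 : ∀ v : X, a u v + b v p = f v)
  (htruth2 : ∀ q : Y, b u q = g q)
  (uN : X) (pN : Y)
:
    ‖u - uN‖ ≤ (⨆ v : {v : X // v ≠ 0}, (f v.1 - a uN v.1 - b v.1 pN) / ‖v.1‖) / αa + Real.sqrt (γa / αa) * (⨆ q : {q : Y // q ≠ 0}, (g q.1 - b uN q.1) / ‖q.1‖) / β := by
  have hrefl : a.IsRefl := fun v w h => (ha_symm w v).trans h
  have hanis : ∀ v, a v v = 0 → v = 0 := fun v hv => by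
    have hv' : ‖v‖ ^ 2 ≤ 0 := nonpos_of_mul_nonpos_right ((ha_coer v).trans_eq hv) hαa
    simpa using hv'
  have hr1 : ∀ v ∈ LinearMap.ker b, (f - a uN - b.flip pN) v = a (u - uN) v := fun v hv => by
    have hb : b v = 0 := hv
    simp only [LinearMap.sub_apply, LinearMap.flip_apply, map_sub, ← htruth1 v, hb,
      LinearMap.zero_apply]
    ring
  have hr2 : g - b uN = b (u - uN) := by
    ext q
    simp [← htruth2 q]
  obtain ⟨z, hz, w, hw, hzw⟩ :=
    exists_add_eq_of_anisotropic hrefl hanis (LinearMap.ker b) (u - uN)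
  have hz_le : ‖z‖ ≤ dualNorm (f - a uN - b.flip pN) / αa := by
    refine norm_le_dualNorm_div hαa ((ha_coer z).trans_eq ?_)
    rw [hr1 z hz, ← hzw, map_add, LinearMap.add_apply, hrefl _ _ (hw z hz), add_zero]
  have hw_le := norm_le_of_mem_orthogonal_ker b hβ hinfsup a hrefl hαa hγa.le ha_coer ha_cont hw
  rw [show b w = g - b uN by rw [hr2, ← hzw, map_add, LinearMap.mem_ker.1 hz, zero_add]]
    at hw_le
  calc ‖u - uN‖ = ‖z + w‖ := by rw [hzw]
    _ ≤ ‖z‖ + ‖w‖ := norm_add_le z w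
    _ ≤ _ := add_le_add hz_le hw_le

theorem stmt5
  {X Y : Type*} [NormedAddCommGroup X] [InnerProductSpace ℝ X] [FiniteDimensional ℝ X]
  [NormedAddCommGroup Y] [InnerProductSpace ℝ Y] [FiniteDimensional ℝ Y]
  (a : X →ₗ[ℝ] X →ₗ[ℝ] ℝ) (b : X →ₗ[ℝ] Y →ₗ[ℝ] ℝ)
  (ha_symm : ∀ w v : X, a w v = a v w)
  (αa γa : ℝ) (hαa : 0 < αa) (hγa : 0 < γa)
  (ha_coer : ∀ v : X, αa * ‖v‖ ^ 2 ≤ a v v)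
  (ha_cont : ∀ w v : X, a w v ≤ γa * ‖w‖ * ‖v‖)
  (β : ℝ) (hβ : 0 < β)
  (hinfsup : ∀ q : Y, β * ‖q‖ ≤ ⨆ v : {v : X // v ≠ 0}, b v.1 q / ‖v.1‖)
  (f : X →ₗ[ℝ] ℝ) (g : Y →ₗ[ℝ] ℝ)
  (u : X) (p : Y)
  (htruth1 : ∀ v : X, a u v + b v p = f v)
  (htruth2 : ∀ q : Y, b u q = g q)
  (XN : Submodule ℝ X) (YN : Submodule ℝ Y)
  (uN : X) (pN : Y) (huN : uN ∈ XN) (hpN : pN ∈ YN)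
  (hrb1 : ∀ v ∈ XN, a uN v + b v pN = f v)
  (hrb2 : ∀ q ∈ YN, b uN q = g q)
:
    ‖u - uN‖ ≤ (⨆ v : {v : X // v ≠ 0}, (f v.1 - a uN v.1 - b v.1 pN) / ‖v.1‖) / αa + Real.sqrt (γa / αa) * (⨆ q : {q : Y // q ≠ 0}, (g q.1 - b uN q.1) / ‖q.1‖) / β :=
  stmt5_general a b ha_symm αa γa hαa hγa ha_coer ha_cont β hβ hinfsup f g u p htruth1 htruth2 uN pN
end

section
/- The error in the Lagrange multiplier satisfies the a posteriori bound ‖p - p_N‖_Y ≤ (1 + √(γ_a/α_a))·‖r¹‖_{X'}/β + (γ_a/β²)·‖r²‖_{Y'}. -/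
/-!
Put `e = u - u_N`. By the inf-sup condition applied to `p - p_N` it suffices to bound `a(e, ·)`
in `X'`, since `b(v, p - p_N) = r¹(v) - a(e, v)`. Split `e = w + z`, where `w` lifts `r²`
(`b(w, ·) = r²`) and is `a`-orthogonal to `ker b`: the inf-sup condition provides a lift of
norm `≤ ‖r²‖/β`, and subtracting its `a`-orthogonal projection onto `ker b` does not increase
its energy, so `a(w, w) ≤ γ_a (‖r²‖/β)²`. Then `z ∈ ker b` is `a`-orthogonal to `w`, hence
`α_a ‖z‖² ≤ a(z, z) = r¹(z) ≤ ‖r¹‖ ‖z‖`. Cauchy–Schwarz for `a` bounds `a(z, ·)` by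
`√(γ_a/α_a) ‖r¹‖` and `a(w, ·)` by `γ_a ‖r²‖/β`.
-/

open LinearMap (BilinForm)
open scoped RealInnerProductSpace

section DualNorm

variable {E : Type*} [NormedAddCommGroup E]

lemma iSup_div_norm_le_s6 {ψ : E → ℝ} {C : ℝ} (hC : 0 ≤ C) (h : ∀ v, ψ v ≤ C * ‖v‖) :
    ⨆ v : {v : E // v ≠ 0}, ψ v.1 / ‖v.1‖ ≤ C :=
  Real.iSup_le (fun v => div_le_of_le_mul₀ (norm_nonneg _) hC (h v)) hC

namespace LinearMap

variable [NormedSpace ℝ E] [FiniteDimensional ℝ E] (φ : E →ₗ[ℝ] ℝ)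

lemma bddAbove_range_div_norm :
    BddAbove (Set.range fun v : {v : E // v ≠ 0} => φ v.1 / ‖v.1‖) := by
  refine ⟨‖φ.toContinuousLinearMap‖, ?_⟩
  rintro _ ⟨v, rfl⟩
  exact div_le_of_le_mul₀ (norm_nonneg _) (norm_nonneg _)
    ((le_abs_self _).trans (φ.toContinuousLinearMap.le_opNorm v))

lemma apply_le_iSup_div_norm_mul (v : E) :
    φ v ≤ (⨆ w : {w : E // w ≠ 0}, φ w.1 / ‖w.1‖) * ‖v‖ := by
  rcases eq_or_ne v 0 with rfl | hv
  · simp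
  · exact (div_le_iff₀ (norm_pos_iff.2 hv)).1 (le_ciSup φ.bddAbove_range_div_norm ⟨v, hv⟩)

lemma iSup_div_norm_nonneg : 0 ≤ ⨆ w : {w : E // w ≠ 0}, φ w.1 / ‖w.1‖ := by
  rcases isEmpty_or_nonempty {w : E // w ≠ 0} with h | ⟨v, hv⟩
  · simp [Real.iSup_of_isEmpty]
  · have h₁ := φ.apply_le_iSup_div_norm_mul v
    have h₂ := φ.apply_le_iSup_div_norm_mul (-v)
    rw [map_neg, norm_neg] at h₂
    have hv₀ := norm_pos_iff.2 hv
    nlinarith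

end LinearMap

end DualNorm

namespace LinearMap.BilinForm

variable {V : Type*} [AddCommGroup V] [Module ℝ V] {B : BilinForm ℝ V}

lemma abs_apply_le_mul (hB : B.IsSymm) (hs : ∀ x, 0 ≤ B x x) {x y : V} {s t : ℝ}
    (hx : B x x ≤ s ^ 2) (hy : B y y ≤ t ^ 2) (hs₀ : 0 ≤ s) (ht₀ : 0 ≤ t) :
    |B x y| ≤ s * t := by
  refine abs_le_of_sq_le_sq ?_ (mul_nonneg hs₀ ht₀)
  calc B x y ^ 2 ≤ B x x * B y y := B.apply_sq_le_of_symm hs (isSymm_iff.1 hB) x y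
    _ ≤ s ^ 2 * t ^ 2 := mul_le_mul hx hy (hs y) (sq_nonneg s)
    _ = (s * t) ^ 2 := by ring

lemma apply_self_le_of_mem_orthogonal (hB : B.IsSymm) (hs : ∀ x, 0 ≤ B x x)
    {W : Submodule ℝ V} {k w : V} (hk : k ∈ W) (hw : w ∈ B.orthogonal W) :
    B w w ≤ B (k + w) (k + w) := by
  have hkw : B k w = 0 := hw k hk
  have hwk : B w k = 0 := by rw [hB.eq, hkw]
  simp only [map_add, LinearMap.add_apply, hkw, hwk]
  linarith [hs k]

lemma exists_add_mem_orthogonal [FiniteDimensional ℝ V] (hB : B.IsSymm)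
    (hpos : ∀ x, x ≠ 0 → 0 < B x x) (W : Submodule ℝ V) (x : V) :
    ∃ k ∈ W, ∃ w ∈ B.orthogonal W, k + w = x := by
  have hdisj : Disjoint W (B.orthogonal W) := by
    refine Submodule.disjoint_def.2 fun y hyW hyO => ?_
    by_contra hy
    exact (hpos y hy).ne' (hyO y hyW)
  have hcompl := (isCompl_orthogonal_iff_disjoint hB.isRefl).2 hdisj
  exact Submodule.mem_sup.1 (hcompl.codisjoint.eq_top ▸ Submodule.mem_top)

lemma apply_self_le_of_coercive {E : Type*} [NormedAddCommGroup E] [Module ℝ E]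
    {a : BilinForm ℝ E} {α R : ℝ} (hα : 0 < α) (ha_coer : ∀ v, α * ‖v‖ ^ 2 ≤ a v v)
    (hR : 0 ≤ R) {z : E} (hz : a z z ≤ R * ‖z‖) :
    a z z ≤ (R / √α) ^ 2 := by
  have hαz : α * ‖z‖ ≤ R := by
    rcases (norm_nonneg z).eq_or_lt with h | h
    · rw [← h, mul_zero]; exact hR
    · exact le_of_mul_le_mul_right (by nlinarith [ha_coer z]) h
  rw [div_pow, Real.sq_sqrt hα.le, le_div_iff₀ hα]
  nlinarith [mul_le_mul_of_nonneg_left hαz hR]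

end LinearMap.BilinForm

section SaddlePoint

variable {X Y : Type*} [NormedAddCommGroup X] [InnerProductSpace ℝ X] [FiniteDimensional ℝ X]
  [NormedAddCommGroup Y] [InnerProductSpace ℝ Y] [FiniteDimensional ℝ Y]
  {a : BilinForm ℝ X} {b : X →ₗ[ℝ] Y →ₗ[ℝ] ℝ} {α γ β : ℝ}

lemma exists_apply_eq_of_infSup (hβ : 0 < β)
    (hinfsup : ∀ q : Y, β * ‖q‖ ≤ ⨆ v : {v : X // v ≠ 0}, b v.1 q / ‖v.1‖) (r : Y →ₗ[ℝ] ℝ) :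
    ∃ w : X, b w = r ∧ β * ‖w‖ ≤ ⨆ q : {q : Y // q ≠ 0}, r q.1 / ‖q.1‖ := by
  have hinner : (innerₗ X : BilinForm ℝ X).Nondegenerate :=
    (BilinForm.nondegenerate_iff' _ (fun _ => real_inner_self_nonneg)
      isSymm_inner).2 fun _ => real_inner_self_pos.2
  -- `S q` represents `b (·) q`; the lift is taken in the range of `S`, where `‖S s‖² = r s`.
  set S : Y →ₗ[ℝ] X := (BilinForm.toDual (innerₗ X) hinner).symm.toLinearMap ∘ₗ b.flip
  have hS : ∀ q v, ⟪S q, v⟫ = b v q := fun q v =>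
    BilinForm.apply_toDual_symm_apply (hB := hinner) (b.flip q) v
  have hS_norm : ∀ q, β * ‖q‖ ≤ ‖S q‖ := fun q => (hinfsup q).trans <|
    iSup_div_norm_le_s6 (norm_nonneg _) fun v => hS q v ▸ real_inner_le_norm _ _
  set c : BilinForm ℝ Y := b ∘ₗ S
  have hc_apply : ∀ q q', c q q' = ⟪S q', S q⟫ := fun q q' => (hS q' (S q)).symm
  have hc : c.Nondegenerate := by
    refine (BilinForm.nondegenerate_iff' _ (fun q => ?_) ⟨fun q q' => ?_⟩).2 fun q hq => ?_
    · rw [hc_apply]; exact real_inner_self_nonneg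
    · rw [RingHom.id_apply, hc_apply, hc_apply, real_inner_comm]
    · rw [hc_apply, real_inner_self_pos]
      exact norm_pos_iff.1 ((mul_pos hβ (norm_pos_iff.2 hq)).trans_le (hS_norm q))
  set s := (c.toDual hc).symm r
  have hbs : b (S s) = r := LinearMap.ext fun q =>
    BilinForm.apply_toDual_symm_apply (B := c) (hB := hc) r q
  refine ⟨S s, hbs, ?_⟩
  have hsq : ‖S s‖ ^ 2 = r s := by rw [← real_inner_self_eq_norm_sq, hS, hbs]
  have key : ‖S s‖ * (β * ‖S s‖) ≤ ‖S s‖ * ⨆ q : {q : Y // q ≠ 0}, r q.1 / ‖q.1‖ := by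
    nlinarith [r.apply_le_iSup_div_norm_mul s, r.iSup_div_norm_nonneg, hS_norm s]
  rcases (norm_nonneg (S s)).eq_or_lt with h | h
  · rw [← h, mul_zero]
    exact r.iSup_div_norm_nonneg
  · exact le_of_mul_le_mul_left key h

lemma exists_apply_eq_mem_orthogonal_ker (ha : a.IsSymm) (ha_pos : ∀ v, v ≠ 0 → 0 < a v v)
    (ha_le : ∀ v, a v v ≤ γ * ‖v‖ ^ 2) (hγ : 0 ≤ γ) (hβ : 0 < β)
    (hinfsup : ∀ q : Y, β * ‖q‖ ≤ ⨆ v : {v : X // v ≠ 0}, b v.1 q / ‖v.1‖) (r : Y →ₗ[ℝ] ℝ) :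
    ∃ w : X, b w = r ∧ w ∈ a.orthogonal (LinearMap.ker b) ∧
      a w w ≤ γ * ((⨆ q : {q : Y // q ≠ 0}, r q.1 / ‖q.1‖) / β) ^ 2 := by
  have ha_nonneg : ∀ v, 0 ≤ a v v := fun v =>
    (eq_or_ne v 0).elim (fun h => by simp [h]) fun h => (ha_pos v h).le
  obtain ⟨w₀, hbw₀, hw₀⟩ := exists_apply_eq_of_infSup hβ hinfsup r
  obtain ⟨k, hk, w, hw, rfl⟩ := a.exists_add_mem_orthogonal ha ha_pos (LinearMap.ker b) w₀
  refine ⟨w, by rwa [map_add, LinearMap.mem_ker.1 hk, zero_add] at hbw₀, hw, ?_⟩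
  calc a w w ≤ a (k + w) (k + w) := a.apply_self_le_of_mem_orthogonal ha ha_nonneg hk hw
    _ ≤ γ * ‖k + w‖ ^ 2 := ha_le _
    _ ≤ γ * ((⨆ q : {q : Y // q ≠ 0}, r q.1 / ‖q.1‖) / β) ^ 2 := by
      gcongr
      rwa [le_div_iff₀ hβ, mul_comm]

theorem norm_le_of_saddlePoint_residual (ha : a.IsSymm) (hα : 0 < α) (hγ : 0 ≤ γ)
    (ha_coer : ∀ v, α * ‖v‖ ^ 2 ≤ a v v) (ha_le : ∀ v, a v v ≤ γ * ‖v‖ ^ 2) (hβ : 0 < β)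
    (hinfsup : ∀ q : Y, β * ‖q‖ ≤ ⨆ v : {v : X // v ≠ 0}, b v.1 q / ‖v.1‖)
    {e : X} {ε : Y} {r₁ : X →ₗ[ℝ] ℝ} {r₂ : Y →ₗ[ℝ] ℝ}
    (h₁ : ∀ v, a e v + b v ε = r₁ v) (h₂ : b e = r₂) :
    ‖ε‖ ≤ (1 + √(γ / α)) * (⨆ v : {v : X // v ≠ 0}, r₁ v.1 / ‖v.1‖) / β +
      (γ / β ^ 2) * ⨆ q : {q : Y // q ≠ 0}, r₂ q.1 / ‖q.1‖ := by
  set R₁ := ⨆ v : {v : X // v ≠ 0}, r₁ v.1 / ‖v.1‖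
  set R₂ := ⨆ q : {q : Y // q ≠ 0}, r₂ q.1 / ‖q.1‖
  have hR₁ : 0 ≤ R₁ := r₁.iSup_div_norm_nonneg
  have hR₂ : 0 ≤ R₂ := r₂.iSup_div_norm_nonneg
  have ha_nonneg : ∀ v, 0 ≤ a v v := fun v => (by positivity : 0 ≤ α * ‖v‖ ^ 2).trans (ha_coer v)
  have ha_pos : ∀ v, v ≠ 0 → 0 < a v v := fun v hv =>
    (mul_pos hα (pow_pos (norm_pos_iff.2 hv) 2)).trans_le (ha_coer v)
  have ha_sqrt : ∀ v, a v v ≤ (√γ * ‖v‖) ^ 2 := fun v => by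
    rw [mul_pow, Real.sq_sqrt hγ]; exact ha_le v
  obtain ⟨w, hbw, hw, haw⟩ := exists_apply_eq_mem_orthogonal_ker ha ha_pos ha_le hγ hβ hinfsup r₂
  have hz : b (e - w) = 0 := by rw [map_sub, h₂, hbw, sub_self]
  have haz : a (e - w) (e - w) = r₁ (e - w) := by
    have hwz : a w (e - w) = 0 := by rw [ha.eq]; exact hw _ (LinearMap.mem_ker.2 hz)
    rw [← h₁, hz, LinearMap.zero_apply, add_zero, map_sub a e w, LinearMap.sub_apply, hwz,
      sub_zero]
  have haz_le : a (e - w) (e - w) ≤ (R₁ / √α) ^ 2 := BilinForm.apply_self_le_of_coercive hα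
    ha_coer hR₁ (haz ▸ r₁.apply_le_iSup_div_norm_mul (e - w))
  have haw_le : a w w ≤ (√γ * (R₂ / β)) ^ 2 := by rwa [mul_pow, Real.sq_sqrt hγ]
  have hbound : ∀ v, b v ε ≤ ((1 + √(γ / α)) * R₁ + γ * (R₂ / β)) * ‖v‖ := by
    intro v
    have hzv := abs_le.1 <| a.abs_apply_le_mul ha ha_nonneg haz_le (ha_sqrt v)
      (by positivity) (by positivity)
    have hwv := abs_le.1 <| a.abs_apply_le_mul ha ha_nonneg haw_le (ha_sqrt v)
      (by positivity) (by positivity)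
    have hsplit : b v ε = r₁ v - a (e - w) v - a w v := by
      rw [← h₁, map_sub, LinearMap.sub_apply]; ring
    have hsqrt : R₁ / √α * (√γ * ‖v‖) = √(γ / α) * R₁ * ‖v‖ := by
      rw [Real.sqrt_div' γ hα.le]; ring
    have hγ' : √γ * (R₂ / β) * (√γ * ‖v‖) = γ * (R₂ / β) * ‖v‖ := by
      linear_combination R₂ / β * ‖v‖ * Real.mul_self_sqrt hγ
    rw [hsplit]
    nlinarith [r₁.apply_le_iSup_div_norm_mul v]
  have hβε := (hinfsup ε).trans (iSup_div_norm_le_s6 (by positivity) hbound)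
  rw [show (1 + √(γ / α)) * R₁ / β + γ / β ^ 2 * R₂ = ((1 + √(γ / α)) * R₁ + γ * (R₂ / β)) / β by
    field_simp, le_div_iff₀ hβ]
  linarith

end SaddlePoint

theorem stmt6_general
  {X Y : Type*} [NormedAddCommGroup X] [InnerProductSpace ℝ X] [FiniteDimensional ℝ X]
  [NormedAddCommGroup Y] [InnerProductSpace ℝ Y] [FiniteDimensional ℝ Y]
  (a : X →ₗ[ℝ] X →ₗ[ℝ] ℝ) (b : X →ₗ[ℝ] Y →ₗ[ℝ] ℝ)
  (ha_symm : ∀ w v : X, a w v = a v w)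
  (αa γa : ℝ) (hαa : 0 < αa) (hγa : 0 < γa)
  (ha_coer : ∀ v : X, αa * ‖v‖ ^ 2 ≤ a v v)
  (ha_cont : ∀ w v : X, a w v ≤ γa * ‖w‖ * ‖v‖)
  (β : ℝ) (hβ : 0 < β)
  (hinfsup : ∀ q : Y, β * ‖q‖ ≤ ⨆ v : {v : X // v ≠ 0}, b v.1 q / ‖v.1‖)
  (f : X →ₗ[ℝ] ℝ) (g : Y →ₗ[ℝ] ℝ)
  (u : X) (p : Y)
  (htruth1 : ∀ v : X, a u v + b v p = f v)
  (htruth2 : ∀ q : Y, b u q = g q)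
  (uN : X) (pN : Y)
:
    ‖p - pN‖ ≤ (1 + Real.sqrt (γa / αa)) * (⨆ v : {v : X // v ≠ 0}, (f v.1 - a uN v.1 - b v.1 pN) / ‖v.1‖) / β + (γa / β ^ 2) * (⨆ q : {q : Y // q ≠ 0}, (g q.1 - b uN q.1) / ‖q.1‖) := by
  have h₁ : ∀ v, a (u - uN) v + b v (p - pN) = (f - a uN - b.flip pN) v := fun v => by
    simp only [map_sub, LinearMap.sub_apply, LinearMap.flip_apply, ← htruth1 v]
    ring
  have h₂ : b (u - uN) = g - b uN := by
    ext q
    simp only [map_sub, LinearMap.sub_apply, htruth2]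
  exact norm_le_of_saddlePoint_residual (a := a) ⟨ha_symm⟩ hαa hγa.le ha_coer
    (fun v => by simpa only [mul_assoc, ← sq] using ha_cont v v) hβ hinfsup h₁ h₂

theorem stmt6
  {X Y : Type*} [NormedAddCommGroup X] [InnerProductSpace ℝ X] [FiniteDimensional ℝ X]
  [NormedAddCommGroup Y] [InnerProductSpace ℝ Y] [FiniteDimensional ℝ Y]
  (a : X →ₗ[ℝ] X →ₗ[ℝ] ℝ) (b : X →ₗ[ℝ] Y →ₗ[ℝ] ℝ)
  (ha_symm : ∀ w v : X, a w v = a v w)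
  (αa γa : ℝ) (hαa : 0 < αa) (hγa : 0 < γa)
  (ha_coer : ∀ v : X, αa * ‖v‖ ^ 2 ≤ a v v)
  (ha_cont : ∀ w v : X, a w v ≤ γa * ‖w‖ * ‖v‖)
  (β : ℝ) (hβ : 0 < β)
  (hinfsup : ∀ q : Y, β * ‖q‖ ≤ ⨆ v : {v : X // v ≠ 0}, b v.1 q / ‖v.1‖)
  (f : X →ₗ[ℝ] ℝ) (g : Y →ₗ[ℝ] ℝ)
  (u : X) (p : Y)
  (htruth1 : ∀ v : X, a u v + b v p = f v)
  (htruth2 : ∀ q : Y, b u q = g q)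
  (XN : Submodule ℝ X) (YN : Submodule ℝ Y)
  (uN : X) (pN : Y) (huN : uN ∈ XN) (hpN : pN ∈ YN)
  (hrb1 : ∀ v ∈ XN, a uN v + b v pN = f v)
  (hrb2 : ∀ q ∈ YN, b uN q = g q)
:
    ‖p - pN‖ ≤ (1 + Real.sqrt (γa / αa)) * (⨆ v : {v : X // v ≠ 0}, (f v.1 - a uN v.1 - b v.1 pN) / ‖v.1‖) / β + (γa / β ^ 2) * (⨆ q : {q : Y // q ≠ 0}, (g q.1 - b uN q.1) / ‖q.1‖) :=
  stmt6_general a b ha_symm αa γa hαa hγa ha_coer ha_cont β hβ hinfsup f g u p htruth1 htruth2 uN pN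
end

section
/- Suppose ẽ⁰ ∈ ker B and ẽ⊥ ∈ X satisfy u - u_N = ẽ⁰ + ẽ⊥ and a(ẽ⊥, v₀) = 0 for all v₀ ∈ ker B. Then the kernel component satisfies ‖ẽ⁰‖_{X,a} ≤ ‖r¹‖_{X'}/√α_a, where ‖v‖_{X,a} = √(a(v,v)) is the energy norm. -/
theorem stmt8
  {X Y : Type*} [NormedAddCommGroup X] [InnerProductSpace ℝ X] [FiniteDimensional ℝ X]
  [NormedAddCommGroup Y] [InnerProductSpace ℝ Y] [FiniteDimensional ℝ Y]
  (a : X →ₗ[ℝ] X →ₗ[ℝ] ℝ) (b : X →ₗ[ℝ] Y →ₗ[ℝ] ℝ)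
  (ha_symm : ∀ w v : X, a w v = a v w)
  (αa γa : ℝ) (hαa : 0 < αa) (hγa : 0 < γa)
  (ha_coer : ∀ v : X, αa * ‖v‖ ^ 2 ≤ a v v)
  (ha_cont : ∀ w v : X, a w v ≤ γa * ‖w‖ * ‖v‖)
  (f : X →ₗ[ℝ] ℝ) (g : Y →ₗ[ℝ] ℝ)
  (u : X) (p : Y)
  (htruth1 : ∀ v : X, a u v + b v p = f v)
  (htruth2 : ∀ q : Y, b u q = g q)
  (XN : Submodule ℝ X) (YN : Submodule ℝ Y)
  (uN : X) (pN : Y) (huN : uN ∈ XN) (hpN : pN ∈ YN)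
  (hrb1 : ∀ v ∈ XN, a uN v + b v pN = f v)
  (hrb2 : ∀ q ∈ YN, b uN q = g q)
  (e0 ep : X) (he0 : ∀ q : Y, b e0 q = 0)
  (hdecomp : u - uN = e0 + ep)
  (hortho : ∀ v0 : X, (∀ q : Y, b v0 q = 0) → a ep v0 = 0)
:
    Real.sqrt (a e0 e0) ≤ (⨆ v : {v : X // v ≠ 0}, (f v.1 - a uN v.1 - b v.1 pN) / ‖v.1‖) / Real.sqrt αa := by
  set r : X →ₗ[ℝ] ℝ := f - a uN - b.flip pN with hrdef
  have hrv : ∀ v : X, r v = f v - a uN v - b v pN := by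
    intro v; simp [hrdef, LinearMap.flip_apply, sub_sub]
  obtain ⟨C, hC⟩ : ∃ C : ℝ, ∀ v : X, r v ≤ C * ‖v‖ := by
    refine ⟨‖LinearMap.toContinuousLinearMap r‖, fun v => ?_⟩
    have := (LinearMap.toContinuousLinearMap r).le_opNorm v
    simp only [Real.norm_eq_abs, LinearMap.coe_toContinuousLinearMap'] at this
    exact (le_abs_self _).trans this
  have hbdd : BddAbove (Set.range fun v : {v : X // v ≠ 0} =>
      (f v.1 - a uN v.1 - b v.1 pN) / ‖v.1‖) := by
    refine ⟨C, ?_⟩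
    rintro x ⟨⟨v, hv⟩, rfl⟩
    have hpos : (0:ℝ) < ‖v‖ := norm_pos_iff.mpr hv
    show (f v - a uN v - b v pN) / ‖v‖ ≤ C
    rw [← hrv, div_le_iff₀ hpos]
    exact hC v
  set S : ℝ := ⨆ v : {v : X // v ≠ 0}, (f v.1 - a uN v.1 - b v.1 pN) / ‖v.1‖ with hS
  have hle : ∀ v : X, v ≠ 0 → r v / ‖v‖ ≤ S := by
    intro v hv
    have := le_ciSup hbdd ⟨v, hv⟩
    rw [hrv]
    exact this
  have hS0 : 0 ≤ S := by
    by_cases h : ∃ v : X, v ≠ 0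
    · obtain ⟨v, hv⟩ := h
      rcases le_or_gt 0 (r v) with hrp | hrn
      · exact le_trans (div_nonneg hrp (norm_nonneg v)) (hle v hv)
      · have hv' : (-v : X) ≠ 0 := neg_ne_zero.mpr hv
        refine le_trans ?_ (hle _ hv')
        rw [map_neg, norm_neg]
        exact div_nonneg (by linarith) (norm_nonneg v)
    · push_neg at h
      have : IsEmpty {v : X // v ≠ 0} := ⟨fun ⟨v, hv⟩ => hv (h v)⟩
      rw [hS, Real.iSup_of_isEmpty]
  have hre0 : r e0 = a e0 e0 := by
    have h1 := htruth1 e0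
    have h2 : a (u - uN) e0 = a e0 e0 + a ep e0 := by
      rw [hdecomp, map_add, LinearMap.add_apply]
    rw [map_sub, LinearMap.sub_apply] at h2
    have h3 : a ep e0 = 0 := hortho e0 he0
    rw [hrv, ← h1, he0 p, he0 pN]
    linarith
  by_cases he : e0 = 0
  · subst he
    simp only [map_zero, LinearMap.zero_apply, Real.sqrt_zero]
    exact div_nonneg hS0 (Real.sqrt_nonneg _)
  · have hnorm : (0:ℝ) < ‖e0‖ := norm_pos_iff.mpr he
    have hae : (0:ℝ) < a e0 e0 :=
      lt_of_lt_of_le (by positivity) (ha_coer e0)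
    rw [le_div_iff₀ (Real.sqrt_pos.mpr hαa)]
    have key : Real.sqrt αa * ‖e0‖ ≤ Real.sqrt (a e0 e0) := by
      have : Real.sqrt (αa * ‖e0‖ ^ 2) ≤ Real.sqrt (a e0 e0) :=
        Real.sqrt_le_sqrt (ha_coer e0)
      rwa [Real.sqrt_mul hαa.le, Real.sqrt_sq (norm_nonneg e0)] at this
    have h4 : Real.sqrt (a e0 e0) * Real.sqrt αa ≤ a e0 e0 / ‖e0‖ := by
      rw [le_div_iff₀ hnorm]
      calc Real.sqrt (a e0 e0) * Real.sqrt αa * ‖e0‖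
          = Real.sqrt (a e0 e0) * (Real.sqrt αa * ‖e0‖) := by ring
        _ ≤ Real.sqrt (a e0 e0) * Real.sqrt (a e0 e0) :=
            mul_le_mul_of_nonneg_left key (Real.sqrt_nonneg _)
        _ = a e0 e0 := Real.mul_self_sqrt hae.le
    exact h4.trans (by rw [← hre0]; exact hle e0 he)
end

section
/- Suppose ẽ⁰ ∈ ker B and ẽ⊥ ∈ X satisfy u - u_N = ẽ⁰ + ẽ⊥ and a(ẽ⊥, v₀) = 0 for all v₀ ∈ ker B. Then the complementary component satisfies ‖ẽ⊥‖_{X,a} ≤ ‖r²‖_{Y'}/β̃, where ‖v‖_{X,a} = √(a(v,v)) is the energy norm. -/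
private lemma cs_aux {X : Type*} [AddCommGroup X] [Module ℝ X]
    (a : X →ₗ[ℝ] X →ₗ[ℝ] ℝ) (hs : ∀ w v, a w v = a v w) (hp : ∀ v, 0 ≤ a v v)
    (x y : X) : (a x y) ^ 2 ≤ a x x * a y y := by
  have key : ∀ t : ℝ, 0 ≤ (a y y) * (t * t) + (2 * a x y) * t + a x x := by
    intro t
    have h := hp (x + t • y)
    have : a (x + t • y) (x + t • y)
        = (a y y) * (t * t) + (2 * a x y) * t + a x x := by
      simp only [map_add, map_smul, LinearMap.add_apply, LinearMap.smul_apply,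
        smul_eq_mul]
      rw [hs y x]; ring
    linarith [this ▸ h]
  have hd : discrim (a y y) (2 * a x y) (a x x) ≤ 0 := discrim_le_zero key
  unfold discrim at hd
  nlinarith

theorem stmt10
  {X Y : Type*} [NormedAddCommGroup X] [InnerProductSpace ℝ X] [FiniteDimensional ℝ X]
  [NormedAddCommGroup Y] [InnerProductSpace ℝ Y] [FiniteDimensional ℝ Y]
  (a : X →ₗ[ℝ] X →ₗ[ℝ] ℝ) (b : X →ₗ[ℝ] Y →ₗ[ℝ] ℝ)
  (ha_symm : ∀ w v : X, a w v = a v w)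
  (αa γa : ℝ) (hαa : 0 < αa) (hγa : 0 < γa)
  (ha_coer : ∀ v : X, αa * ‖v‖ ^ 2 ≤ a v v)
  (ha_cont : ∀ w v : X, a w v ≤ γa * ‖w‖ * ‖v‖)
  (βt : ℝ) (hβt : 0 < βt)
  (hinfsup_a : ∀ q : Y, βt * ‖q‖ ≤ ⨆ v : {v : X // v ≠ 0}, b v.1 q / Real.sqrt (a v.1 v.1))
  (f : X →ₗ[ℝ] ℝ) (g : Y →ₗ[ℝ] ℝ)
  (u : X) (p : Y)
  (htruth1 : ∀ v : X, a u v + b v p = f v)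
  (htruth2 : ∀ q : Y, b u q = g q)
  (XN : Submodule ℝ X) (YN : Submodule ℝ Y)
  (uN : X) (pN : Y) (huN : uN ∈ XN) (hpN : pN ∈ YN)
  (hrb1 : ∀ v ∈ XN, a uN v + b v pN = f v)
  (hrb2 : ∀ q ∈ YN, b uN q = g q)
  (e0 ep : X) (he0 : ∀ q : Y, b e0 q = 0)
  (hdecomp : u - uN = e0 + ep)
  (hortho : ∀ v0 : X, (∀ q : Y, b v0 q = 0) → a ep v0 = 0)
:
    Real.sqrt (a ep ep) ≤ (⨆ q : {q : Y // q ≠ 0}, (g q.1 - b uN q.1) / ‖q.1‖) / βt := by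
  have hp : ∀ v : X, 0 ≤ a v v := fun v =>
    le_trans (by positivity) (ha_coer v)
  -- step 1 : a ep ∈ range b.flip
  set W : Submodule ℝ (Module.Dual ℝ X) := LinearMap.range b.flip with hW
  have hepW : a ep ∈ W := by
    have h1 : a ep ∈ W.dualCoannihilator.dualAnnihilator := by
      rw [Submodule.mem_dualAnnihilator]
      intro x hx
      rw [Submodule.mem_dualCoannihilator] at hx
      exact hortho x (fun q => hx (b.flip q) ⟨q, rfl⟩)
    rwa [Subspace.dualCoannihilator_dualAnnihilator_eq] at h1
  obtain ⟨qb, hqb⟩ := hepW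
  have hqb' : ∀ v : X, b v qb = a ep v := fun v => by
    rw [← hqb]; rfl
  -- terms of the sup
  have hterm : ∀ q : Y, g q - b uN q = b ep q := by
    intro q
    have h1 : b (u - uN) q = b u q - b uN q := by
      simp [map_sub]
    have h2 : b (e0 + ep) q = b e0 q + b ep q := by
      simp [map_add]
    rw [← htruth2 q]
    rw [hdecomp] at h1
    rw [h2, he0 q] at h1
    linarith
  simp only [hterm]
  set s : ℝ := Real.sqrt (a ep ep) with hs
  have hs0 : 0 ≤ s := Real.sqrt_nonneg _
  -- boundedness of the sup
  set L := LinearMap.toContinuousLinearMap (b ep) with hL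
  have hbd : BddAbove (Set.range fun q : {q : Y // q ≠ 0} => b ep q.1 / ‖q.1‖) := by
    refine ⟨‖L‖, ?_⟩
    rintro x ⟨q, rfl⟩
    have h1 : b ep q.1 = L q.1 := rfl
    have h2 : ‖L q.1‖ ≤ ‖L‖ * ‖q.1‖ := L.le_opNorm q.1
    have hq : 0 < ‖q.1‖ := norm_pos_iff.mpr q.2
    rw [div_le_iff₀ hq, h1]
    calc L q.1 ≤ ‖L q.1‖ := le_abs_self _
      _ ≤ ‖L‖ * ‖q.1‖ := h2
  set R : ℝ := ⨆ q : {q : Y // q ≠ 0}, b ep q.1 / ‖q.1‖ with hR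
  -- R ≥ 0
  have hR0 : 0 ≤ R := by
    by_cases hne : Nonempty {q : Y // q ≠ 0}
    · obtain ⟨q0⟩ := hne
      have hq0 : (-q0.1 : Y) ≠ 0 := neg_ne_zero.mpr q0.2
      have h1 : b ep q0.1 / ‖q0.1‖ ≤ R := le_ciSup hbd q0
      have h2 : b ep (-q0.1) / ‖(-q0.1 : Y)‖ ≤ R := le_ciSup hbd ⟨-q0.1, hq0⟩
      rw [map_neg, norm_neg, neg_div] at h2
      linarith
    · haveI := not_nonempty_iff.mp hne
      rw [hR, iSup_of_empty' (fun q : {q : Y // q ≠ 0} => b ep q.1 / ‖q.1‖),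
        Real.sSup_empty]
  -- βt * ‖qb‖ ≤ s
  have hqbnorm : βt * ‖qb‖ ≤ s := by
    refine le_trans (hinfsup_a qb) ?_
    by_cases hne : Nonempty {v : X // v ≠ 0}
    · refine ciSup_le fun v => ?_
      have hvpos : 0 < a v.1 v.1 := by
        have := ha_coer v.1
        have : 0 < αa * ‖v.1‖ ^ 2 := by
          have : 0 < ‖v.1‖ := norm_pos_iff.mpr v.2
          positivity
        linarith [ha_coer v.1]
      have hsq : 0 < Real.sqrt (a v.1 v.1) := Real.sqrt_pos.mpr hvpos
      rw [div_le_iff₀ hsq, hqb' v.1]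
      have hcs : (a ep v.1) ^ 2 ≤ a ep ep * a v.1 v.1 := cs_aux a ha_symm hp ep v.1
      nlinarith [Real.sq_sqrt (hp ep), Real.sq_sqrt (hp v.1),
        Real.sqrt_nonneg (a v.1 v.1), mul_nonneg hs0 hsq.le]
    · haveI := not_nonempty_iff.mp hne
      rw [iSup_of_empty' (fun v : {v : X // v ≠ 0} => b v.1 qb / Real.sqrt (a v.1 v.1)),
        Real.sSup_empty]
      exact hs0
  -- a ep ep ≤ R * ‖qb‖
  have hmain : a ep ep ≤ R * ‖qb‖ := by
    by_cases hq : qb = 0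
    · have : a ep ep = 0 := by rw [← hqb' ep, hq, map_zero]
      simp [this, hq]
    · have h1 : b ep qb / ‖qb‖ ≤ R := le_ciSup hbd ⟨qb, hq⟩
      have hqpos : 0 < ‖qb‖ := norm_pos_iff.mpr hq
      rw [div_le_iff₀ hqpos] at h1
      rw [← hqb' ep]
      linarith
  -- conclude
  have hss : s ^ 2 = a ep ep := by rw [hs]; exact Real.sq_sqrt (hp ep)
  clear_value s R L
  rw [le_div_iff₀ hβt]
  rcases eq_or_lt_of_le hs0 with h | h
  · calc s * βt = 0 := by rw [← h]; ring
      _ ≤ R := hR0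
  · have h1 : (s * βt) * s ≤ R * s := by
      calc (s * βt) * s = βt * s ^ 2 := by ring
        _ = βt * a ep ep := by rw [hss]
        _ ≤ βt * (R * ‖qb‖) := mul_le_mul_of_nonneg_left hmain hβt.le
        _ = R * (βt * ‖qb‖) := by ring
        _ ≤ R * s := mul_le_mul_of_nonneg_left hqbnorm hR0
    exact le_of_mul_le_mul_right h1 h
end

section
/- The error in the Lagrange multiplier is controlled by the error in the primal variable: ‖p - p_N‖_Y ≤ (1/β)·(‖r¹‖_{X'} + √γ_a·‖u - u_N‖_{X,a}), where ‖v‖_{X,a} = √(a(v,v)) is the energy norm. -/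
/-!
Write `e = u - u_N`. Subtracting the residual from the first truth equation gives
`b(v, p - p_N) = r¹(v) - a(e, v)` for every `v`. Cauchy–Schwarz for the positive semidefinite
symmetric form `a`, combined with its continuity, bounds `-a(e, v)` by `√γ_a ‖e‖_{X,a} ‖v‖_X`.
Dividing by `‖v‖_X` and taking the supremum over `v ≠ 0`, the inf-sup condition bounds the left
side from below by `β ‖p - p_N‖_Y`.
-/

lemma Real.iSup_add_le_of_bddAbove {ι : Sort*} {f g : ι → ℝ} {C : ℝ}
    (hf : BddAbove (Set.range f)) (hg : ∀ i, g i ≤ C) (hC : 0 ≤ C) :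
    ⨆ i, (f i + g i) ≤ (⨆ i, f i) + C := by
  cases isEmpty_or_nonempty ι
  · simpa using hC
  · exact ciSup_le fun i ↦ add_le_add (le_ciSup hf i) (hg i)

lemma LinearMap.bddAbove_range_div_norm_s12 {X : Type*} [NormedAddCommGroup X] [NormedSpace ℝ X]
    [FiniteDimensional ℝ X] (L : X →ₗ[ℝ] ℝ) :
    BddAbove (Set.range fun v : {v : X // v ≠ 0} ↦ L v / ‖v.1‖) := by
  refine ⟨‖LinearMap.toContinuousLinearMap L‖, Set.forall_mem_range.2 fun v ↦ ?_⟩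
  refine div_le_of_le_mul₀ (norm_nonneg _) (norm_nonneg _) ?_
  exact (le_abs_self _).trans ((LinearMap.toContinuousLinearMap L).le_opNorm v.1)

lemma LinearMap.BilinForm.abs_apply_le_sqrt_mul_sqrt_s12 {X : Type*} [AddCommGroup X] [Module ℝ X]
    (a : LinearMap.BilinForm ℝ X) (ha_nonneg : ∀ v, 0 ≤ a v v)
    (ha_symm : ∀ w v, a w v = a v w) (w v : X) : |a w v| ≤ √(a w w) * √(a v v) := by
  rw [← Real.sqrt_mul (ha_nonneg w)]
  exact Real.abs_le_sqrt (apply_sq_le_of_symm a ha_nonneg ⟨ha_symm⟩ w v)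

lemma sqrt_apply_self_le_sqrt_mul_norm {X : Type*} [NormedAddCommGroup X] [NormedSpace ℝ X]
    (a : X →ₗ[ℝ] X →ₗ[ℝ] ℝ) {γ : ℝ} (ha_cont : ∀ w v : X, a w v ≤ γ * ‖w‖ * ‖v‖) (v : X) :
    √(a v v) ≤ √γ * ‖v‖ := by
  calc √(a v v) ≤ √(γ * ‖v‖ ^ 2) := Real.sqrt_le_sqrt (by nlinarith [ha_cont v v])
    _ = √γ * ‖v‖ := by rw [Real.sqrt_mul' _ (by positivity), Real.sqrt_sq (norm_nonneg v)]

theorem stmt12_general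
  {X Y : Type*} [NormedAddCommGroup X] [InnerProductSpace ℝ X] [FiniteDimensional ℝ X]
  [NormedAddCommGroup Y] [InnerProductSpace ℝ Y]
  (a : X →ₗ[ℝ] X →ₗ[ℝ] ℝ) (b : X →ₗ[ℝ] Y →ₗ[ℝ] ℝ)
  (ha_symm : ∀ w v : X, a w v = a v w)
  (αa γa : ℝ) (hαa : 0 < αa)
  (ha_coer : ∀ v : X, αa * ‖v‖ ^ 2 ≤ a v v)
  (ha_cont : ∀ w v : X, a w v ≤ γa * ‖w‖ * ‖v‖)
  (β : ℝ) (hβ : 0 < β)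
  (hinfsup : ∀ q : Y, β * ‖q‖ ≤ ⨆ v : {v : X // v ≠ 0}, b v.1 q / ‖v.1‖)
  (f : X →ₗ[ℝ] ℝ)
  (u : X) (p : Y)
  (htruth1 : ∀ v : X, a u v + b v p = f v)
  (uN : X) (pN : Y)
:
    ‖p - pN‖ ≤ (1 / β) * ((⨆ v : {v : X // v ≠ 0}, (f v.1 - a uN v.1 - b v.1 pN) / ‖v.1‖) + Real.sqrt γa * Real.sqrt (a (u - uN) (u - uN))) := by
  set e := u - uN
  have ha_nonneg (v : X) : 0 ≤ a v v := le_trans (by positivity) (ha_coer v)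
  have herror (v : X) : b v (p - pN) = (f v - a uN v - b v pN) + -a e v := by
    simp only [e, map_sub, LinearMap.sub_apply]
    linarith [htruth1 v]
  have henergy (v : {v : X // v ≠ 0}) : -a e v / ‖v.1‖ ≤ √γa * √(a e e) := by
    refine div_le_of_le_mul₀ (norm_nonneg _) (by positivity) ?_
    calc -a e v ≤ √(a e e) * √(a v v) :=
          (neg_le_abs _).trans
            (LinearMap.BilinForm.abs_apply_le_sqrt_mul_sqrt_s12 a ha_nonneg ha_symm e v)
      _ ≤ √(a e e) * (√γa * ‖v.1‖) := by
          gcongr; exact sqrt_apply_self_le_sqrt_mul_norm a ha_cont v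
      _ = √γa * √(a e e) * ‖v.1‖ := by ring
  have hβbound : β * ‖p - pN‖ ≤ (⨆ v : {v : X // v ≠ 0}, (f v.1 - a uN v.1 - b v.1 pN) / ‖v.1‖)
      + √γa * √(a e e) := by
    calc β * ‖p - pN‖ ≤ ⨆ v : {v : X // v ≠ 0}, b v.1 (p - pN) / ‖v.1‖ := hinfsup _
      _ = ⨆ v : {v : X // v ≠ 0}, ((f v.1 - a uN v.1 - b v.1 pN) / ‖v.1‖ + -a e v / ‖v.1‖) := by
          simp only [herror, add_div]
      _ ≤ _ := Real.iSup_add_le_of_bddAbove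
          ((f - a uN - b.flip pN).bddAbove_range_div_norm_s12) henergy (by positivity)
  rwa [one_div_mul_eq_div, le_div_iff₀' hβ]

theorem stmt12
  {X Y : Type*} [NormedAddCommGroup X] [InnerProductSpace ℝ X] [FiniteDimensional ℝ X]
  [NormedAddCommGroup Y] [InnerProductSpace ℝ Y] [FiniteDimensional ℝ Y]
  (a : X →ₗ[ℝ] X →ₗ[ℝ] ℝ) (b : X →ₗ[ℝ] Y →ₗ[ℝ] ℝ)
  (ha_symm : ∀ w v : X, a w v = a v w)
  (αa γa : ℝ) (hαa : 0 < αa) (hγa : 0 < γa)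
  (ha_coer : ∀ v : X, αa * ‖v‖ ^ 2 ≤ a v v)
  (ha_cont : ∀ w v : X, a w v ≤ γa * ‖w‖ * ‖v‖)
  (β : ℝ) (hβ : 0 < β)
  (hinfsup : ∀ q : Y, β * ‖q‖ ≤ ⨆ v : {v : X // v ≠ 0}, b v.1 q / ‖v.1‖)
  (f : X →ₗ[ℝ] ℝ) (g : Y →ₗ[ℝ] ℝ)
  (u : X) (p : Y)
  (htruth1 : ∀ v : X, a u v + b v p = f v)
  (htruth2 : ∀ q : Y, b u q = g q)
  (XN : Submodule ℝ X) (YN : Submodule ℝ Y)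
  (uN : X) (pN : Y) (huN : uN ∈ XN) (hpN : pN ∈ YN)
  (hrb1 : ∀ v ∈ XN, a uN v + b v pN = f v)
  (hrb2 : ∀ q ∈ YN, b uN q = g q)
:
    ‖p - pN‖ ≤ (1 / β) * ((⨆ v : {v : X // v ≠ 0}, (f v.1 - a uN v.1 - b v.1 pN) / ‖v.1‖) + Real.sqrt γa * Real.sqrt (a (u - uN) (u - uN))) :=
  stmt12_general a b ha_symm αa γa hαa ha_coer ha_cont β hβ hinfsup f u p htruth1 uN pN
end

section
/- The error in the primal variable satisfies, in terms of the energy dual norm of the first residual, ‖u - u_N‖_{X,a} ≤ ‖r¹‖_{X',a} + ‖r²‖_{Y'}/β̃, where ‖v‖_{X,a} = √(a(v,v)) is the energy norm and ‖r¹‖_{X',a} = sup_{v ≠ 0} r¹(v)/‖v‖_{X,a}. -/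
private lemma cs_sq_aux {X : Type*} [AddCommGroup X] [Module ℝ X]
    (a : X →ₗ[ℝ] X →ₗ[ℝ] ℝ) (hsymm : ∀ w v, a w v = a v w)
    (hpos : ∀ v, 0 ≤ a v v) (w v : X) :
    (a w v) ^ 2 ≤ a w w * a v v := by
  have key : ∀ t : ℝ, 0 ≤ a v v * (t * t) + (2 * a w v) * t + a w w := by
    intro t
    have h := hpos (w + t • v)
    have hexp : a (w + t • v) (w + t • v)
        = a v v * (t * t) + (2 * a w v) * t + a w w := by
      simp only [map_add, map_smul, LinearMap.add_apply, LinearMap.smul_apply,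
        smul_eq_mul]
      rw [hsymm v w]
      ring
    linarith [hexp ▸ h]
  have hd := discrim_le_zero key
  rw [discrim] at hd
  nlinarith

set_option maxHeartbeats 1000000 in
theorem stmt14
  {X Y : Type*} [NormedAddCommGroup X] [InnerProductSpace ℝ X] [FiniteDimensional ℝ X]
  [NormedAddCommGroup Y] [InnerProductSpace ℝ Y] [FiniteDimensional ℝ Y]
  (a : X →ₗ[ℝ] X →ₗ[ℝ] ℝ) (b : X →ₗ[ℝ] Y →ₗ[ℝ] ℝ)
  (ha_symm : ∀ w v : X, a w v = a v w)
  (αa γa : ℝ) (hαa : 0 < αa) (hγa : 0 < γa)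
  (ha_coer : ∀ v : X, αa * ‖v‖ ^ 2 ≤ a v v)
  (ha_cont : ∀ w v : X, a w v ≤ γa * ‖w‖ * ‖v‖)
  (βt : ℝ) (hβt : 0 < βt)
  (hinfsup_a : ∀ q : Y, βt * ‖q‖ ≤ ⨆ v : {v : X // v ≠ 0}, b v.1 q / Real.sqrt (a v.1 v.1))
  (f : X →ₗ[ℝ] ℝ) (g : Y →ₗ[ℝ] ℝ)
  (u : X) (p : Y)
  (htruth1 : ∀ v : X, a u v + b v p = f v)
  (htruth2 : ∀ q : Y, b u q = g q)
  (XN : Submodule ℝ X) (YN : Submodule ℝ Y)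
  (uN : X) (pN : Y) (huN : uN ∈ XN) (hpN : pN ∈ YN)
  (hrb1 : ∀ v ∈ XN, a uN v + b v pN = f v)
  (hrb2 : ∀ q ∈ YN, b uN q = g q)
:
    Real.sqrt (a (u - uN) (u - uN)) ≤ (⨆ v : {v : X // v ≠ 0}, (f v.1 - a uN v.1 - b v.1 pN) / Real.sqrt (a v.1 v.1)) + (⨆ q : {q : Y // q ≠ 0}, (g q.1 - b uN q.1) / ‖q.1‖) / βt := by
  -- basic positivity facts
  have hpos : ∀ v : X, 0 ≤ a v v := fun v =>
    le_trans (by positivity) (ha_coer v)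
  have hzero : ∀ v : X, a v v ≤ 0 → v = 0 := by
    intro v hv
    have h1 : αa * ‖v‖ ^ 2 ≤ 0 := le_trans (ha_coer v) hv
    have h2 : ‖v‖ = 0 := by
      by_contra hne
      have hvp : 0 < ‖v‖ := (norm_nonneg v).lt_of_ne (Ne.symm hne)
      nlinarith [mul_pos hαa (pow_pos hvp 2)]
    exact norm_eq_zero.mp h2
  have hapos : ∀ v : X, v ≠ 0 → 0 < a v v := by
    intro v hv
    rcases lt_or_ge 0 (a v v) with h | h
    · exact h
    · exact absurd (hzero v h) hv
  have hsqrtpos : ∀ v : X, v ≠ 0 → 0 < Real.sqrt (a v v) := fun v hv =>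
    Real.sqrt_pos.mpr (hapos v hv)
  -- Cauchy-Schwarz for a
  have haCS : ∀ w v : X, a w v ≤ Real.sqrt (a w w) * Real.sqrt (a v v) := by
    intro w v
    have h := cs_sq_aux a ha_symm hpos w v
    calc a w v ≤ |a w v| := le_abs_self _
      _ = Real.sqrt ((a w v) ^ 2) := (Real.sqrt_sq_eq_abs _).symm
      _ ≤ Real.sqrt (a w w * a v v) := Real.sqrt_le_sqrt h
      _ = Real.sqrt (a w w) * Real.sqrt (a v v) := Real.sqrt_mul (hpos w) _
  -- lower bound on sqrt (a v v)
  have hsqrt_lb : ∀ v : X, Real.sqrt αa * ‖v‖ ≤ Real.sqrt (a v v) := by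
    intro v
    have h : Real.sqrt (αa * ‖v‖ ^ 2) ≤ Real.sqrt (a v v) := Real.sqrt_le_sqrt (ha_coer v)
    rwa [Real.sqrt_mul hαa.le, Real.sqrt_sq (norm_nonneg v)] at h
  set e : X := u - uN with he
  -- residuals as linear maps
  set R1 : X →ₗ[ℝ] ℝ := f - a uN - b.flip pN with hR1
  set R2 : Y →ₗ[ℝ] ℝ := g - b uN with hR2
  have hR1app : ∀ v : X, R1 v = f v - a uN v - b v pN := by
    intro v; simp [hR1, LinearMap.sub_apply, LinearMap.flip_apply]
  have hR2app : ∀ q : Y, R2 q = g q - b uN q := by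
    intro q; simp [hR2, LinearMap.sub_apply]
  -- residual identities
  have hR1id : ∀ v : X, R1 v = a e v + b v (p - pN) := by
    intro v
    rw [hR1app, ← htruth1 v]
    simp only [he, map_sub, LinearMap.sub_apply]
    ring
  have hR2id : ∀ q : Y, R2 q = b e q := by
    intro q
    rw [hR2app, ← htruth2 q]
    simp only [he, map_sub, LinearMap.sub_apply]
  -- the sups
  set S1 : ℝ := ⨆ v : {v : X // v ≠ 0}, (f v.1 - a uN v.1 - b v.1 pN) / Real.sqrt (a v.1 v.1) with hS1
  set S2 : ℝ := ⨆ q : {q : Y // q ≠ 0}, (g q.1 - b uN q.1) / ‖q.1‖ with hS2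
  -- bounded above
  have hR1bound : ∀ v : X, R1 v ≤ ‖LinearMap.toContinuousLinearMap R1‖ * ‖v‖ := by
    intro v
    have h := (LinearMap.toContinuousLinearMap R1).le_opNorm v
    have h2 : (LinearMap.toContinuousLinearMap R1) v = R1 v := by simp
    rw [h2, Real.norm_eq_abs] at h
    exact le_trans (le_abs_self _) h
  have hbdd1 : BddAbove (Set.range fun v : {v : X // v ≠ 0} =>
      (f v.1 - a uN v.1 - b v.1 pN) / Real.sqrt (a v.1 v.1)) := by
    refine ⟨‖LinearMap.toContinuousLinearMap R1‖ / Real.sqrt αa, ?_⟩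
    rintro x ⟨⟨v, hv⟩, rfl⟩
    have hnum : f v - a uN v - b v pN ≤ ‖LinearMap.toContinuousLinearMap R1‖ * ‖v‖ := by
      rw [← hR1app]; exact hR1bound v
    have hvpos : (0:ℝ) < ‖v‖ := norm_pos_iff.mpr hv
    have hd0 : 0 < Real.sqrt αa * ‖v‖ := by positivity
    have h : (f v - a uN v - b v pN) / Real.sqrt (a v v)
        ≤ (‖LinearMap.toContinuousLinearMap R1‖ * ‖v‖) / (Real.sqrt αa * ‖v‖) :=
      div_le_div₀ (by positivity) hnum hd0 (hsqrt_lb v)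
    simpa [mul_div_mul_right _ _ hvpos.ne'] using h
  have hR2bound : ∀ q : Y, R2 q ≤ ‖LinearMap.toContinuousLinearMap R2‖ * ‖q‖ := by
    intro q
    have h := (LinearMap.toContinuousLinearMap R2).le_opNorm q
    have h2 : (LinearMap.toContinuousLinearMap R2) q = R2 q := by simp
    rw [h2, Real.norm_eq_abs] at h
    exact le_trans (le_abs_self _) h
  have hbdd2 : BddAbove (Set.range fun q : {q : Y // q ≠ 0} =>
      (g q.1 - b uN q.1) / ‖q.1‖) := by
    refine ⟨‖LinearMap.toContinuousLinearMap R2‖, ?_⟩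
    rintro x ⟨⟨q, hq⟩, rfl⟩
    have hnum : g q - b uN q ≤ ‖LinearMap.toContinuousLinearMap R2‖ * ‖q‖ := by
      rw [← hR2app]; exact hR2bound q
    have hq0 : (0:ℝ) < ‖q‖ := norm_pos_iff.mpr hq
    rw [div_le_iff₀ hq0]
    exact hnum
  -- upper bound facts
  have hS1ub : ∀ v : X, R1 v ≤ S1 * Real.sqrt (a v v) := by
    intro v
    rcases eq_or_ne v 0 with rfl | hv
    · simp
    · have h := le_ciSup hbdd1 ⟨v, hv⟩
      rw [← hS1, ← hR1app] at h
      have hp := hsqrtpos v hv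
      calc R1 v = (R1 v / Real.sqrt (a v v)) * Real.sqrt (a v v) := by field_simp
        _ ≤ S1 * Real.sqrt (a v v) := mul_le_mul_of_nonneg_right h (Real.sqrt_nonneg _)
  have hS2ub : ∀ q : Y, R2 q ≤ S2 * ‖q‖ := by
    intro q
    rcases eq_or_ne q 0 with rfl | hq
    · simp
    · have h := le_ciSup hbdd2 ⟨q, hq⟩
      rw [← hS2, ← hR2app] at h
      have hq0 : (0:ℝ) < ‖q‖ := norm_pos_iff.mpr hq
      calc R2 q = (R2 q / ‖q‖) * ‖q‖ := by field_simp
        _ ≤ S2 * ‖q‖ := mul_le_mul_of_nonneg_right h (norm_nonneg _)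
  -- nonnegativity of the sups
  have hS1nn : 0 ≤ S1 := by
    rcases isEmpty_or_nonempty {v : X // v ≠ 0} with hE | hN
    · rw [hS1, Real.iSup_of_isEmpty]
    · obtain ⟨v⟩ := hN
      have h1 := le_ciSup hbdd1 v
      have h2 := le_ciSup hbdd1 ⟨-v.1, neg_ne_zero.mpr v.2⟩
      rw [← hS1] at h1 h2
      have hval : (f (-v.1) - a uN (-v.1) - b (-v.1) pN) / Real.sqrt (a (-v.1) (-v.1))
          = -((f v.1 - a uN v.1 - b v.1 pN) / Real.sqrt (a v.1 v.1)) := by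
        have hne : a (-v.1) (-v.1) = a v.1 v.1 := by
          simp [map_neg, LinearMap.neg_apply]
        rw [hne]
        simp only [map_neg, LinearMap.neg_apply]
        ring
      rw [hval] at h2
      linarith
  have hS2nn : 0 ≤ S2 := by
    rcases isEmpty_or_nonempty {q : Y // q ≠ 0} with hE | hN
    · rw [hS2, Real.iSup_of_isEmpty]
    · obtain ⟨q⟩ := hN
      have h1 := le_ciSup hbdd2 q
      have h2 := le_ciSup hbdd2 ⟨-q.1, neg_ne_zero.mpr q.2⟩
      rw [← hS2] at h1 h2
      have hval : (g (-q.1) - b uN (-q.1)) / ‖(-q.1)‖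
          = -((g q.1 - b uN q.1) / ‖q.1‖) := by
        simp only [map_neg, LinearMap.neg_apply, norm_neg]
        ring
      rw [hval] at h2
      linarith
  -- existence of the "pressure-lifting" component z
  have hzex : ∃ z : X, (∀ q : Y, b (e - z) q = 0) ∧ a z (e - z) = 0 ∧
      Real.sqrt (a z z) ≤ S2 / βt := by
    have hAinj : Function.Injective a := by
      rw [injective_iff_map_eq_zero]
      intro v hv
      exact hzero v (by rw [hv]; simp)
    have hAsurj : Function.Surjective a :=
      (LinearMap.injective_iff_surjective_of_finrank_eq_finrank
        Subspace.dual_finrank_eq.symm).mp hAinj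
    let A : X ≃ₗ[ℝ] Module.Dual ℝ X := LinearEquiv.ofBijective a ⟨hAinj, hAsurj⟩
    let T : Y →ₗ[ℝ] X := A.symm.toLinearMap ∘ₗ b.flip
    have hTa : ∀ (q : Y) (v : X), a (T q) v = b v q := by
      intro q v
      have h : a (A.symm (b.flip q)) = b.flip q := A.apply_symm_apply (b.flip q)
      have h2 : T q = A.symm (b.flip q) := rfl
      rw [h2, h, LinearMap.flip_apply]
    have hcinj : Function.Injective (a.compl₁₂ T T) := by
      rw [injective_iff_map_eq_zero]
      intro q hq
      have hcqq : a (T q) (T q) = 0 := by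
        have := LinearMap.congr_fun hq q
        rwa [LinearMap.compl₁₂_apply, LinearMap.zero_apply] at this
      have hTq0 : T q = 0 := hzero _ hcqq.le
      have hbq : ∀ v : X, b v q = 0 := by
        intro v
        rw [← hTa q v, hTq0]
        simp
      have hsup0 : (⨆ v : {v : X // v ≠ 0}, b v.1 q / Real.sqrt (a v.1 v.1)) = 0 := by
        rcases isEmpty_or_nonempty {v : X // v ≠ 0} with hE | hN
        · exact Real.iSup_of_isEmpty _
        · have hz : ∀ v : {v : X // v ≠ 0}, b v.1 q / Real.sqrt (a v.1 v.1) = 0 := by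
            intro v; rw [hbq]; simp
          simp only [hz]
          exact ciSup_const
      have h := hinfsup_a q
      rw [hsup0] at h
      have h2 : ‖q‖ ≤ 0 := by nlinarith
      exact norm_eq_zero.mp (le_antisymm h2 (norm_nonneg q))
    have hcsurj : Function.Surjective (a.compl₁₂ T T) :=
      (LinearMap.injective_iff_surjective_of_finrank_eq_finrank
        Subspace.dual_finrank_eq.symm).mp hcinj
    obtain ⟨q₀, hq₀⟩ := hcsurj ((a.flip e) ∘ₗ T)
    have hq₀app : ∀ q : Y, a (T q₀) (T q) = a (T q) e := by
      intro q
      have h := LinearMap.congr_fun hq₀ q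
      rw [LinearMap.compl₁₂_apply] at h
      rw [h]
      simp [LinearMap.flip_apply]
    refine ⟨T q₀, ?_, ?_, ?_⟩
    · -- b (e - T q₀) q = 0
      intro q
      rw [map_sub, LinearMap.sub_apply]
      have h1 : b (T q₀) q = a (T q) (T q₀) := (hTa q (T q₀)).symm
      have h2 : b e q = a (T q) e := (hTa q e).symm
      rw [h1, h2, ha_symm (T q) (T q₀), hq₀app q]
      ring
    · -- orthogonality
      have h1 : a (T q₀) (e - T q₀) = a (T q₀) e - a (T q₀) (T q₀) := by
        rw [map_sub]
      rw [h1, hq₀app q₀]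
      ring
    · -- norm bound
      have hzz : a (T q₀) (T q₀) = R2 q₀ := by
        rw [hR2id, ← hTa q₀ e]
        exact hq₀app q₀
      have hq0norm : βt * ‖q₀‖ ≤ Real.sqrt (a (T q₀) (T q₀)) := by
        refine le_trans (hinfsup_a q₀) ?_
        rcases isEmpty_or_nonempty {v : X // v ≠ 0} with hE | hN
        · rw [Real.iSup_of_isEmpty]
          exact Real.sqrt_nonneg _
        · refine ciSup_le ?_
          rintro ⟨v, hv⟩
          have h1 : b v q₀ = a (T q₀) v := (hTa q₀ v).symm
          rw [h1, div_le_iff₀ (hsqrtpos v hv)]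
          exact haCS (T q₀) v
      set Z : ℝ := Real.sqrt (a (T q₀) (T q₀)) with hZ
      have hZnn : 0 ≤ Z := Real.sqrt_nonneg _
      have hZ2 : Z ^ 2 = a (T q₀) (T q₀) := Real.sq_sqrt (hpos _)
      have h1 : a (T q₀) (T q₀) ≤ S2 * ‖q₀‖ := hzz ▸ hS2ub q₀
      have h2 : ‖q₀‖ ≤ Z / βt := by
        rw [le_div_iff₀ hβt]
        linarith [hq0norm]
      have h4 : Z ^ 2 ≤ (S2 / βt) * Z := by
        rw [hZ2]
        calc a (T q₀) (T q₀) ≤ S2 * ‖q₀‖ := h1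
          _ ≤ S2 * (Z / βt) := mul_le_mul_of_nonneg_left h2 hS2nn
          _ = (S2 / βt) * Z := by ring
      rcases eq_or_lt_of_le hZnn with h | h
      · rw [← h]; positivity
      · nlinarith
  obtain ⟨z, hbw, horth, hZle⟩ := hzex
  set w : X := e - z with hw
  have hwz : w + z = e := by rw [hw]; abel
  -- Pythagoras
  have hpyth : a e e = a w w + a z z := by
    rw [← hwz]
    simp only [map_add, LinearMap.add_apply]
    have h1 : a w z = a z w := ha_symm w z
    rw [h1, horth]
    ring
  set E : ℝ := Real.sqrt (a e e) with hE
  set W : ℝ := Real.sqrt (a w w) with hWd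
  set Z : ℝ := Real.sqrt (a z z) with hZd
  have hEnn : 0 ≤ E := Real.sqrt_nonneg _
  have hE2 : E ^ 2 = a e e := Real.sq_sqrt (hpos e)
  have hWle : W ≤ E := Real.sqrt_le_sqrt (by linarith [hpos z])
  -- a e w = R1 w and its bound
  have haew : a e w ≤ S1 * E := by
    have h0 : a e w = R1 w := by
      rw [hR1id w]
      have hb0 : b w (p - pN) = 0 := hbw (p - pN)
      rw [hb0]
      ring
    calc a e w = R1 w := h0
      _ ≤ S1 * W := hS1ub w
      _ ≤ S1 * E := mul_le_mul_of_nonneg_left hWle hS1nn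
  have haez : a e z ≤ E * (S2 / βt) := by
    calc a e z ≤ E * Z := haCS e z
      _ ≤ E * (S2 / βt) := mul_le_mul_of_nonneg_left hZle hEnn
  have hsplit : a e e = a e w + a e z := by
    rw [← hwz, map_add]
  have hkey : E ^ 2 ≤ S1 * E + (S2 / βt) * E := by
    rw [hE2, hsplit]
    have := haez
    nlinarith [haew, haez]
  rcases eq_or_lt_of_le hEnn with h | h
  · rw [← h]
    positivity
  · nlinarith
end
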